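/- arXiv:2312.10889 — 17 statements merged into one kernel-verified Lean document; each statement's English description precedes it below -/
import Mathlib

section
/- Let p and n be positive integers with n ≥ 2, and let a_1, ..., a_n be positive integers with gcd(a_1, ..., a_n) = 1 such that p does not divide a_i for any i (write a_i = p·k_i + t_i with 1 ≤ t_i ≤ p − 1). Let T_p be the set of tuples (x_1, ..., x_n) of integers with 0 ≤ x_i ≤ p − 1 for all i such that p divides x_1·t_1 + ... + x_n·t_n and x_1·t_1 + ... + x_n·t_n ≠ 0. Then the quotient ⟨a_1,...,a_n⟩/p equals the numerical semigroup generated by {a_1, ..., a_n} together with the numbers (x_1·a_1 + ... + x_n·a_n)/p for (x_1, ..., x_n) ∈ T_p. -/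
/-!
Write `p * m = ∑ cᵢ aᵢ` and divide each coefficient by `p`: `cᵢ = p qᵢ + rᵢ` with `rᵢ < p`.
Then `m = ∑ qᵢ aᵢ + (∑ rᵢ aᵢ) / p`, and `p ∣ ∑ rᵢ tᵢ` because `aᵢ ≡ tᵢ [MOD p]`.
Either `∑ rᵢ tᵢ = 0`, which forces `r = 0` since every `tᵢ` is positive,
or `r ∈ T_p`. Conversely every new generator `s = (∑ xᵢ aᵢ) / p` satisfies
`p * s = ∑ xᵢ aᵢ`.
-/

variable {ι : Type*} [Fintype ι]

lemma mem_closure_range_iff_exists_sum_mul {a : ι → ℕ} {m : ℕ} :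
    m ∈ AddSubmonoid.closure (Set.range a) ↔ ∃ c : ι → ℕ, m = ∑ i, c i * a i := by
  simp only [AddSubmonoid.mem_closure_range_iff_of_fintype, smul_eq_mul]

lemma sum_mul_modEq_sum_mul_mod (p : ℕ) (x a : ι → ℕ) :
    ∑ i, x i * a i ≡ ∑ i, x i * (a i % p) [MOD p] :=
  Nat.ModEq.sum fun i _ => (Nat.mod_modEq (a i) p).symm.mul_left (x i)

lemma sum_mul_eq_mul_sum_div_mul_add_sum_mod_mul (p : ℕ) (c a : ι → ℕ) :
    ∑ i, c i * a i = p * ∑ i, c i / p * a i + ∑ i, c i % p * a i := by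
  rw [Finset.mul_sum, ← Finset.sum_add_distrib]
  refine Finset.sum_congr rfl fun i _ => ?_
  conv_lhs => rw [← Nat.div_add_mod (c i) p]
  ring

lemma eq_zero_of_sum_mul_mod_eq_zero {p : ℕ} {x a : ι → ℕ} (hnd : ∀ i, ¬ p ∣ a i)
    (h : ∑ i, x i * (a i % p) = 0) : x = 0 := by
  funext i
  rcases Nat.mul_eq_zero.mp (Finset.sum_eq_zero_iff.mp h i (Finset.mem_univ i)) with hx | hmod
  · exact hx
  · exact absurd (Nat.dvd_of_mod_eq_zero hmod) (hnd i)

/-- The numbers `(∑ xᵢ aᵢ) / p` for `x ∈ T_p`, where `tᵢ = aᵢ % p`. -/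
def quotientGenerators (p : ℕ) (a : ι → ℕ) : Set ℕ :=
  {s | ∃ x : ι → ℕ, (∀ i, x i ≤ p - 1) ∧ p ∣ (∑ i, x i * (a i % p)) ∧
    (∑ i, x i * (a i % p)) ≠ 0 ∧ s = (∑ i, x i * a i) / p}

lemma closure_range_union_quotientGenerators_le_comap (p : ℕ) (a : ι → ℕ) :
    AddSubmonoid.closure (Set.range a ∪ quotientGenerators p a) ≤
      (AddSubmonoid.closure (Set.range a)).comap (AddMonoidHom.mulLeft p) := by
  rw [AddSubmonoid.closure_le]
  rintro s (⟨i, rfl⟩ | ⟨x, -, hdvd, -, rfl⟩)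
  · exact nsmul_mem (AddSubmonoid.subset_closure (Set.mem_range_self i)) p
  · have hdvd' : p ∣ ∑ i, x i * a i :=
      ((sum_mul_modEq_sum_mul_mod p x a).dvd_iff dvd_rfl).mpr hdvd
    show p * ((∑ i, x i * a i) / p) ∈ AddSubmonoid.closure (Set.range a)
    rw [Nat.mul_div_cancel' hdvd']
    exact mem_closure_range_iff_exists_sum_mul.mpr ⟨x, rfl⟩

lemma sum_mul_div_mem_closure_range_union_quotientGenerators {p : ℕ} {a x : ι → ℕ}
    (hnd : ∀ i, ¬ p ∣ a i) (hx : ∀ i, x i < p) (hdvd : p ∣ ∑ i, x i * a i) :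
    (∑ i, x i * a i) / p ∈ AddSubmonoid.closure (Set.range a ∪ quotientGenerators p a) := by
  by_cases hzero : ∑ i, x i * (a i % p) = 0
  · simp [eq_zero_of_sum_mul_mod_eq_zero hnd hzero]
  · refine AddSubmonoid.subset_closure (Or.inr ⟨x, fun i => ?_, ?_, hzero, rfl⟩)
    · exact Nat.le_sub_one_of_lt (hx i)
    · exact ((sum_mul_modEq_sum_mul_mod p x a).dvd_iff dvd_rfl).mp hdvd

lemma mem_closure_range_union_quotientGenerators {p : ℕ} (hp : 0 < p) {a : ι → ℕ}
    (hnd : ∀ i, ¬ p ∣ a i) {m : ℕ} (hm : p * m ∈ AddSubmonoid.closure (Set.range a)) :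
    m ∈ AddSubmonoid.closure (Set.range a ∪ quotientGenerators p a) := by
  obtain ⟨c, hc⟩ := mem_closure_range_iff_exists_sum_mul.mp hm
  rw [sum_mul_eq_mul_sum_div_mul_add_sum_mod_mul p] at hc
  have hdvd : p ∣ ∑ i, c i % p * a i :=
    (Nat.dvd_add_right (dvd_mul_right _ _)).mp ⟨m, hc.symm⟩
  have hm_eq : m = ∑ i, c i / p * a i + (∑ i, c i % p * a i) / p := by
    apply Nat.eq_of_mul_eq_mul_left hp
    rw [hc, Nat.mul_add, Nat.mul_div_cancel' hdvd]
  rw [hm_eq]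
  refine add_mem (AddSubmonoid.closure_mono Set.subset_union_left ?_)
    (sum_mul_div_mem_closure_range_union_quotientGenerators hnd (fun i => Nat.mod_lt _ hp) hdvd)
  exact mem_closure_range_iff_exists_sum_mul.mpr ⟨_, rfl⟩

theorem quotient_numerical_semigroup_generators_general
    (p n : ℕ) (hp : 0 < p) (a : Fin n → ℕ)
    (hnd : ∀ i, ¬ p ∣ a i) :
    {m : ℕ | p * m ∈ AddSubmonoid.closure (Set.range a)} =
      ↑(AddSubmonoid.closure
        (Set.range a ∪
          {s : ℕ | ∃ x : Fin n → ℕ, (∀ i, x i ≤ p - 1) ∧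
            p ∣ (∑ i, x i * (a i % p)) ∧ (∑ i, x i * (a i % p)) ≠ 0 ∧
            s = (∑ i, x i * a i) / p})) := by
  ext m
  exact ⟨mem_closure_range_union_quotientGenerators hp hnd,
    fun h => closure_range_union_quotientGenerators_le_comap p a h⟩

/-- Theorem 1.1: For `A = (a_1,...,a_n)` with `gcd A = 1`, `p ∤ a_i` for all `i`
(so `a_i = p k_i + t_i` with `1 ≤ t_i ≤ p-1`, i.e. `t_i = a_i % p`), the quotient
`⟨A⟩/p` is generated by the `a_i` together with `(∑ x_i a_i)/p` for
`(x_1,...,x_n) ∈ T_p`. -/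
theorem quotient_numerical_semigroup_generators
    (p n : ℕ) (hp : 0 < p) (hn : 2 ≤ n) (a : Fin n → ℕ)
    (ha : ∀ i, 0 < a i) (hgcd : Finset.univ.gcd a = 1)
    (hnd : ∀ i, ¬ p ∣ a i) :
    {m : ℕ | p * m ∈ AddSubmonoid.closure (Set.range a)} =
      ↑(AddSubmonoid.closure
        (Set.range a ∪
          {s : ℕ | ∃ x : Fin n → ℕ, (∀ i, x i ≤ p - 1) ∧
            p ∣ (∑ i, x i * (a i % p)) ∧ (∑ i, x i * (a i % p)) ≠ 0 ∧
            s = (∑ i, x i * a i) / p})) :=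
  quotient_numerical_semigroup_generators_general p n hp a hnd
end

section
/- Let k_1, k_2, k_3 ∈ ℕ and set a_1 = 3k_1 + 1, a_2 = 3k_2 + 2, a_3 = 3k_3 + 2, with gcd(a_1, a_2, a_3) = 1. Then the quotient ⟨a_1, a_2, a_3⟩/3 equals the numerical semigroup generated by a_1, a_2, a_3, (a_1 + a_2)/3, (a_1 + a_3)/3, (2a_2 + a_3)/3, and (a_2 + 2a_3)/3. -/
/-! If `3m = x a₁ + y a₂ + z a₃`, reducing `x, y, z` modulo 3 writes `m` as an element of
`⟨a₁, a₂, a₃⟩` plus some `n` with `3n = r a₁ + s a₂ + t a₃` and `r, s, t < 3`. As `a₁ ≡ 1` and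
`a₂ ≡ a₃ ≡ 2 (mod 3)`, this forces `r ≡ s + t (mod 3)`, and for each of the nine such triples
`n` is a sum of at most two of the generators `(a₁ + a₂)/3, (a₁ + a₃)/3, (2a₂ + a₃)/3,
(a₂ + 2a₃)/3`. Conversely, three times each generator lies in `⟨a₁, a₂, a₃⟩`. -/

namespace AddSubmonoid

theorem mem_closure_triple {A : Type*} [AddCommMonoid A] (a b c x : A) :
    x ∈ closure ({a, b, c} : Set A) ↔ ∃ l m n : ℕ, l • a + m • b + n • c = x := by
  rw [← Set.singleton_union, closure_union, mem_sup]
  simp_rw [mem_closure_singleton, mem_closure_pair]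
  constructor
  · rintro ⟨_, ⟨l, rfl⟩, _, ⟨m, n, rfl⟩, rfl⟩
    exact ⟨l, m, n, add_assoc _ _ _⟩
  · rintro ⟨l, m, n, rfl⟩
    exact ⟨_, ⟨l, rfl⟩, _, ⟨m, n, rfl⟩, (add_assoc _ _ _).symm⟩

theorem exists_add_of_mul_mem_closure_triple {a b c d m : ℕ} (hd : 0 < d)
    (h : d * m ∈ closure ({a, b, c} : Set ℕ)) :
    ∃ n, ∃ r < d, ∃ s < d, ∃ t < d, d * n = r * a + s * b + t * c ∧
      ∃ p ∈ closure ({a, b, c} : Set ℕ), m = n + p := by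
  obtain ⟨x, y, z, hxyz⟩ := (mem_closure_triple a b c _).1 h
  simp only [smul_eq_mul] at hxyz
  set p := x / d * a + y / d * b + z / d * c
  set R := x % d * a + y % d * b + z % d * c
  have hsplit : d * m = d * p + R := by
    rw [← hxyz]
    conv_lhs => rw [← Nat.div_add_mod x d, ← Nat.div_add_mod y d, ← Nat.div_add_mod z d]
    ring
  have hpm : p ≤ m := Nat.le_of_mul_le_mul_left (by omega) hd
  refine ⟨m - p, x % d, Nat.mod_lt _ hd, y % d, Nat.mod_lt _ hd, z % d, Nat.mod_lt _ hd,
    ?_, p, (mem_closure_triple a b c p).2 ⟨x / d, y / d, z / d, rfl⟩, by omega⟩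
  rw [Nat.mul_sub, hsplit]
  omega

end AddSubmonoid

def quotientThreeGenerators (a₁ a₂ a₃ : ℕ) : Set ℕ :=
  {a₁, a₂, a₃, (a₁ + a₂) / 3, (a₁ + a₃) / 3, (2 * a₂ + a₃) / 3, (a₂ + 2 * a₃) / 3}

section

variable {a₁ a₂ a₃ : ℕ}

theorem closure_quotientThreeGenerators_le_comap (h₁ : a₁ % 3 = 1) (h₂ : a₂ % 3 = 2)
    (h₃ : a₃ % 3 = 2) :
    AddSubmonoid.closure (quotientThreeGenerators a₁ a₂ a₃) ≤
      (AddSubmonoid.closure ({a₁, a₂, a₃} : Set ℕ)).comap (AddMonoidHom.mulLeft 3) := by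
  refine AddSubmonoid.closure_le.2 fun g hg ↦ (AddSubmonoid.mem_closure_triple _ _ _ _).2 ?_
  simp only [smul_eq_mul, AddMonoidHom.coe_mulLeft]
  rcases hg with rfl | rfl | rfl | rfl | rfl | rfl | rfl
  · exact ⟨3, 0, 0, by ring⟩
  · exact ⟨0, 3, 0, by ring⟩
  · exact ⟨0, 0, 3, by ring⟩
  · exact ⟨1, 1, 0, by omega⟩
  · exact ⟨1, 0, 1, by omega⟩
  · exact ⟨0, 2, 1, by omega⟩
  · exact ⟨0, 1, 2, by omega⟩

theorem mem_closure_quotientThreeGenerators_of_three_mul_eq (h₁ : a₁ % 3 = 1)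
    (h₂ : a₂ % 3 = 2) (h₃ : a₃ % 3 = 2) {n r s t : ℕ}
    (hr : r < 3) (hs : s < 3) (ht : t < 3) (hn : 3 * n = r * a₁ + s * a₂ + t * a₃) :
    n ∈ AddSubmonoid.closure (quotientThreeGenerators a₁ a₂ a₃) := by
  have mem : ∀ g ∈ quotientThreeGenerators a₁ a₂ a₃,
      g ∈ AddSubmonoid.closure (quotientThreeGenerators a₁ a₂ a₃) :=
    fun _ hg ↦ AddSubmonoid.subset_closure hg
  have b₁₂ := mem ((a₁ + a₂) / 3) (by simp [quotientThreeGenerators])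
  have b₁₃ := mem ((a₁ + a₃) / 3) (by simp [quotientThreeGenerators])
  have b₂₂₃ := mem ((2 * a₂ + a₃) / 3) (by simp [quotientThreeGenerators])
  have b₂₃₃ := mem ((a₂ + 2 * a₃) / 3) (by simp [quotientThreeGenerators])
  interval_cases r <;> interval_cases s <;> interval_cases t <;> try omega
  · obtain rfl : n = 0 := by omega
    exact zero_mem _
  · obtain rfl : n = (a₂ + 2 * a₃) / 3 := by omega
    exact b₂₃₃
  · obtain rfl : n = (2 * a₂ + a₃) / 3 := by omega
    exact b₂₂₃
  · obtain rfl : n = (a₁ + a₃) / 3 := by omega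
    exact b₁₃
  · obtain rfl : n = (a₁ + a₂) / 3 := by omega
    exact b₁₂
  · obtain rfl : n = (a₁ + a₂) / 3 + (a₂ + 2 * a₃) / 3 := by omega
    exact add_mem b₁₂ b₂₃₃
  · obtain rfl : n = (a₁ + a₃) / 3 + (a₁ + a₃) / 3 := by omega
    exact add_mem b₁₃ b₁₃
  · obtain rfl : n = (a₁ + a₂) / 3 + (a₁ + a₃) / 3 := by omega
    exact add_mem b₁₂ b₁₃
  · obtain rfl : n = (a₁ + a₂) / 3 + (a₁ + a₂) / 3 := by omega
    exact add_mem b₁₂ b₁₂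

theorem comap_mulLeft_three_closure_le (h₁ : a₁ % 3 = 1) (h₂ : a₂ % 3 = 2)
    (h₃ : a₃ % 3 = 2) :
    (AddSubmonoid.closure ({a₁, a₂, a₃} : Set ℕ)).comap (AddMonoidHom.mulLeft 3) ≤
      AddSubmonoid.closure (quotientThreeGenerators a₁ a₂ a₃) := by
  intro m hm
  obtain ⟨n, r, hr, s, hs, t, ht, hn, p, hp, rfl⟩ :=
    AddSubmonoid.exists_add_of_mul_mem_closure_triple (d := 3) (by norm_num) hm
  refine add_mem (mem_closure_quotientThreeGenerators_of_three_mul_eq h₁ h₂ h₃ hr hs ht hn) ?_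
  refine AddSubmonoid.closure_mono ?_ hp
  simp [quotientThreeGenerators, Set.insert_subset_iff]

end

theorem quotient_3k1_3k2_3k3_general
    (k₁ k₂ k₃ : ℕ) (a₁ a₂ a₃ : ℕ)
    (ha₁ : a₁ = 3 * k₁ + 1) (ha₂ : a₂ = 3 * k₂ + 2) (ha₃ : a₃ = 3 * k₃ + 2) :
    {m : ℕ | 3 * m ∈ AddSubmonoid.closure ({a₁, a₂, a₃} : Set ℕ)} =
      ↑(AddSubmonoid.closure
        ({a₁, a₂, a₃, (a₁ + a₂) / 3, (a₁ + a₃) / 3,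
          (2 * a₂ + a₃) / 3, (a₂ + 2 * a₃) / 3} : Set ℕ)) := by
  have h₁ : a₁ % 3 = 1 := by omega
  have h₂ : a₂ % 3 = 2 := by omega
  have h₃ : a₃ % 3 = 2 := by omega
  exact congrArg SetLike.coe <| le_antisymm (comap_mulLeft_three_closure_le h₁ h₂ h₃)
    (closure_quotientThreeGenerators_le_comap h₁ h₂ h₃)

/-- Proposition 2.7: for `a₁ = 3k₁+1`, `a₂ = 3k₂+2`, `a₃ = 3k₃+2` with gcd 1,
`⟨a₁,a₂,a₃⟩/3 = ⟨a₁, a₂, a₃, (a₁+a₂)/3, (a₁+a₃)/3, (2a₂+a₃)/3, (a₂+2a₃)/3⟩`. -/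
theorem quotient_3k1_3k2_3k3
    (k₁ k₂ k₃ : ℕ) (a₁ a₂ a₃ : ℕ)
    (ha₁ : a₁ = 3 * k₁ + 1) (ha₂ : a₂ = 3 * k₂ + 2) (ha₃ : a₃ = 3 * k₃ + 2)
    (hgcd : Nat.gcd a₁ (Nat.gcd a₂ a₃) = 1) :
    {m : ℕ | 3 * m ∈ AddSubmonoid.closure ({a₁, a₂, a₃} : Set ℕ)} =
      ↑(AddSubmonoid.closure
        ({a₁, a₂, a₃, (a₁ + a₂) / 3, (a₁ + a₃) / 3,
          (2 * a₂ + a₃) / 3, (a₂ + 2 * a₃) / 3} : Set ℕ)) :=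
  quotient_3k1_3k2_3k3_general k₁ k₂ k₃ a₁ a₂ a₃ ha₁ ha₂ ha₃
end

section
/- Let k_1, k_2, k_3 ∈ ℕ and set a_1 = 3k_1 + 1, a_2 = 3k_2 + 2, a_3 = 3k_3 + 2, with gcd(a_1, a_2, a_3) = 1. Let d(m) denote the number of triples (y_1, y_2, y_3) ∈ ℕ³ with y_1·a_1 + y_2·a_2 + y_3·a_3 = m (and d(m) = 0 if m < 0). Then for every n ∈ ℕ, d(3n) equals the sum of d(n − e) over the nine-term list of exponents e = 0, (a_1+a_2)/3, (a_1+a_3)/3, (2a_2+a_3)/3, (a_2+2a_3)/3, 2(a_1+a_2)/3, 2(a_1+a_3)/3, (2a_1+a_2+a_3)/3, (a_1+2a_2+2a_3)/3 (counted with multiplicity if two exponents coincide). -/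
lemma rgf_fin (a₁ a₂ a₃ : ℕ) (h₁ : 0 < a₁) (h₂ : 0 < a₂) (h₃ : 0 < a₃) (m : ℤ) :
    {y : ℕ × ℕ × ℕ | (y.1 : ℤ) * a₁ + (y.2.1 : ℤ) * a₂ + (y.2.2 : ℤ) * a₃ = m}.Finite := by
  apply Set.Finite.subset ((Set.finite_Iic m.toNat).prod
    ((Set.finite_Iic m.toNat).prod (Set.finite_Iic m.toNat)))
  rintro ⟨y₁, y₂, y₃⟩ hy
  simp only [Set.mem_setOf_eq] at hy
  have ha₁ : (1:ℤ) ≤ a₁ := by exact_mod_cast h₁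
  have ha₂ : (1:ℤ) ≤ a₂ := by exact_mod_cast h₂
  have ha₃ : (1:ℤ) ≤ a₃ := by exact_mod_cast h₃
  have n₁ : (0:ℤ) ≤ y₁ := Int.natCast_nonneg _
  have n₂ : (0:ℤ) ≤ y₂ := Int.natCast_nonneg _
  have n₃ : (0:ℤ) ≤ y₃ := Int.natCast_nonneg _
  have b₁ : (y₁:ℤ) ≤ m := by nlinarith
  have b₂ : (y₂:ℤ) ≤ m := by nlinarith
  have b₃ : (y₃:ℤ) ≤ m := by nlinarith
  refine ⟨?_, ?_, ?_⟩ <;> simp only [Set.mem_Iic] <;> omega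

lemma rgf_fiber_eq (a₁ a₂ a₃ c₁ c₂ c₃ e : ℕ)
    (hc₁ : c₁ < 3) (hc₂ : c₂ < 3) (hc₃ : c₃ < 3)
    (he : c₁ * a₁ + c₂ * a₂ + c₃ * a₃ = 3 * e) (m : ℤ) :
    ({y : ℕ × ℕ × ℕ | ((y.1 : ℤ) * a₁ + (y.2.1 : ℤ) * a₂ + (y.2.2 : ℤ) * a₃ = 3 * m)
        ∧ y.1 % 3 = c₁ ∧ y.2.1 % 3 = c₂ ∧ y.2.2 % 3 = c₃}).ncard
    = ({z : ℕ × ℕ × ℕ | (z.1 : ℤ) * a₁ + (z.2.1 : ℤ) * a₂ + (z.2.2 : ℤ) * a₃ = m - e}).ncard := by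
  have he' : (c₁:ℤ) * a₁ + (c₂:ℤ) * a₂ + (c₃:ℤ) * a₃ = 3 * e := by exact_mod_cast he
  have himg : {y : ℕ × ℕ × ℕ | ((y.1 : ℤ) * a₁ + (y.2.1 : ℤ) * a₂ + (y.2.2 : ℤ) * a₃ = 3 * m)
        ∧ y.1 % 3 = c₁ ∧ y.2.1 % 3 = c₂ ∧ y.2.2 % 3 = c₃}
      = (fun z : ℕ × ℕ × ℕ => (3 * z.1 + c₁, 3 * z.2.1 + c₂, 3 * z.2.2 + c₃)) ''
        {z : ℕ × ℕ × ℕ | (z.1 : ℤ) * a₁ + (z.2.1 : ℤ) * a₂ + (z.2.2 : ℤ) * a₃ = m - e} := by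
    ext ⟨y₁, y₂, y₃⟩
    simp only [Set.mem_setOf_eq, Set.mem_image, Prod.mk.injEq, Prod.exists]
    constructor
    · rintro ⟨heq, h1, h2, h3⟩
      refine ⟨y₁ / 3, y₂ / 3, y₃ / 3, ?_, by omega, by omega, by omega⟩
      have e1 : y₁ = 3 * (y₁ / 3) + c₁ := by omega
      have e2 : y₂ = 3 * (y₂ / 3) + c₂ := by omega
      have e3 : y₃ = 3 * (y₃ / 3) + c₃ := by omega
      rw [e1, e2, e3] at heq
      push_cast at heq ⊢
      linarith
    · rintro ⟨z₁, z₂, z₃, hz, rfl, rfl, rfl⟩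
      refine ⟨by push_cast; linarith, by omega, by omega, by omega⟩
  rw [himg, Set.ncard_image_of_injective]
  rintro ⟨x₁, x₂, x₃⟩ ⟨z₁, z₂, z₃⟩ h
  simp only [Prod.mk.injEq] at h ⊢
  omega

lemma rgf_fiber_card (a₁ a₂ a₃ c₁ c₂ c₃ e : ℕ)
    (hc₁ : c₁ < 3) (hc₂ : c₂ < 3) (hc₃ : c₃ < 3)
    (he : c₁ * a₁ + c₂ * a₂ + c₃ * a₃ = 3 * e) (m : ℤ)
    (hfin : ({y : ℕ × ℕ × ℕ | (y.1 : ℤ) * a₁ + (y.2.1 : ℤ) * a₂ + (y.2.2 : ℤ) * a₃ = 3 * m}).Finite) :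
    (hfin.toFinset.filter
        (fun y => (y.1 % 3, y.2.1 % 3, y.2.2 % 3) = (c₁, c₂, c₃))).card
    = ({z : ℕ × ℕ × ℕ | (z.1 : ℤ) * a₁ + (z.2.1 : ℤ) * a₂ + (z.2.2 : ℤ) * a₃ = m - e}).ncard := by
  rw [← rgf_fiber_eq a₁ a₂ a₃ c₁ c₂ c₃ e hc₁ hc₂ hc₃ he m, ← Set.ncard_coe_finset]
  congr 1
  ext ⟨y₁, y₂, y₃⟩
  simp only [Finset.coe_filter, Set.Finite.mem_toFinset, Set.mem_setOf_eq, Prod.mk.injEq]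

/-- The RGF identity for `⟨3k₁+1, 3k₂+2, 3k₃+2⟩/3`: for every `n`,
`d(3n) = ∑ₑ d(n - e)` over the nine exponents of the numerator of `RGF₃(x)`. -/
theorem rgf_identity_3k1_3k2_3k3
    (k₁ k₂ k₃ : ℕ) (a₁ a₂ a₃ : ℕ)
    (ha₁ : a₁ = 3 * k₁ + 1) (ha₂ : a₂ = 3 * k₂ + 2) (ha₃ : a₃ = 3 * k₃ + 2)
    (hgcd : Nat.gcd a₁ (Nat.gcd a₂ a₃) = 1)
    (d : ℤ → ℕ)
    (hd : ∀ m : ℤ, d m =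
      Set.ncard {y : ℕ × ℕ × ℕ |
        (y.1 : ℤ) * a₁ + (y.2.1 : ℤ) * a₂ + (y.2.2 : ℤ) * a₃ = m}) :
    ∀ n : ℕ, d (3 * n) =
      d n +
      d ((n : ℤ) - ((a₁ + a₂) / 3 : ℕ)) +
      d ((n : ℤ) - ((a₁ + a₃) / 3 : ℕ)) +
      d ((n : ℤ) - ((2 * a₂ + a₃) / 3 : ℕ)) +
      d ((n : ℤ) - ((a₂ + 2 * a₃) / 3 : ℕ)) +
      d ((n : ℤ) - ((2 * (a₁ + a₂)) / 3 : ℕ)) +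
      d ((n : ℤ) - ((2 * (a₁ + a₃)) / 3 : ℕ)) +
      d ((n : ℤ) - ((2 * a₁ + a₂ + a₃) / 3 : ℕ)) +
      d ((n : ℤ) - ((a₁ + 2 * a₂ + 2 * a₃) / 3 : ℕ)) := by
  intro n
  clear hgcd
  have h1x := hd
  clear hd
  have h1 : (a₁ + a₂) / 3 = k₁ + k₂ + 1 := by omega
  have h2 : (a₁ + a₃) / 3 = k₁ + k₃ + 1 := by omega
  have h3 : (2 * a₂ + a₃) / 3 = 2 * k₂ + k₃ + 2 := by omega
  have h4 : (a₂ + 2 * a₃) / 3 = k₂ + 2 * k₃ + 2 := by omega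
  have h5 : (2 * (a₁ + a₂)) / 3 = 2 * k₁ + 2 * k₂ + 2 := by omega
  have h6 : (2 * (a₁ + a₃)) / 3 = 2 * k₁ + 2 * k₃ + 2 := by omega
  have h7 : (2 * a₁ + a₂ + a₃) / 3 = 2 * k₁ + k₂ + k₃ + 2 := by omega
  have h8 : (a₁ + 2 * a₂ + 2 * a₃) / 3 = k₁ + 2 * k₂ + 2 * k₃ + 3 := by omega
  rw [h1, h2, h3, h4, h5, h6, h7, h8]
  clear h1 h2 h3 h4 h5 h6 h7 h8
  simp only [h1x]
  have hfin := rgf_fin a₁ a₂ a₃ (by omega) (by omega) (by omega) (3 * (n:ℤ))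
  have hmem : ∀ y ∈ hfin.toFinset,
      (fun y : ℕ × ℕ × ℕ => (y.1 % 3, y.2.1 % 3, y.2.2 % 3)) y ∈
      ({(0,0,0),(1,1,0),(1,0,1),(0,2,1),(0,1,2),(2,2,0),(2,0,2),(2,1,1),(1,2,2)} :
        Finset (ℕ × ℕ × ℕ)) := by
    rintro ⟨y₁, y₂, y₃⟩ hy
    simp only [Set.Finite.mem_toFinset, Set.mem_setOf_eq] at hy
    have hdvd : (3:ℤ) ∣ ((y₁:ℤ) + 2 * y₂ + 2 * y₃) := by
      refine ⟨(n:ℤ) - ((y₁:ℤ) * k₁ + (y₂:ℤ) * k₂ + (y₃:ℤ) * k₃), ?_⟩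
      subst ha₁ ha₂ ha₃
      push_cast at hy ⊢
      linarith
    have hdvd' : 3 ∣ (y₁ + 2 * y₂ + 2 * y₃) := by exact_mod_cast hdvd
    clear hy hdvd h1x
    simp only [Finset.mem_insert, Finset.mem_singleton, Prod.mk.injEq]
    have hm1 : y₁ % 3 = 0 ∨ y₁ % 3 = 1 ∨ y₁ % 3 = 2 := by omega
    have hm2 : y₂ % 3 = 0 ∨ y₂ % 3 = 1 ∨ y₂ % 3 = 2 := by omega
    have hm3 : y₃ % 3 = 0 ∨ y₃ % 3 = 1 ∨ y₃ % 3 = 2 := by omega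
    rcases hm1 with hm1|hm1|hm1 <;> rcases hm2 with hm2|hm2|hm2 <;>
      rcases hm3 with hm3|hm3|hm3 <;>
      first
        | (exfalso; omega)
        | (left; omega)
        | (right; left; omega)
        | (right; right; left; omega)
        | (right; right; right; left; omega)
        | (right; right; right; right; left; omega)
        | (right; right; right; right; right; left; omega)
        | (right; right; right; right; right; right; left; omega)
        | (right; right; right; right; right; right; right; left; omega)
        | (right; right; right; right; right; right; right; right; omega)
  have hcard := Finset.card_eq_sum_card_fiberwise hmem
  rw [Set.ncard_eq_toFinset_card _ hfin, hcard]
  rw [Finset.sum_insert (by decide), Finset.sum_insert (by decide),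
    Finset.sum_insert (by decide), Finset.sum_insert (by decide),
    Finset.sum_insert (by decide), Finset.sum_insert (by decide),
    Finset.sum_insert (by decide), Finset.sum_insert (by decide),
    Finset.sum_singleton]
  rw [rgf_fiber_card a₁ a₂ a₃ 0 0 0 0 (by omega) (by omega) (by omega) (by omega) n hfin,
    rgf_fiber_card a₁ a₂ a₃ 1 1 0 (k₁ + k₂ + 1) (by omega) (by omega) (by omega) (by omega) n hfin,
    rgf_fiber_card a₁ a₂ a₃ 1 0 1 (k₁ + k₃ + 1) (by omega) (by omega) (by omega) (by omega) n hfin,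
    rgf_fiber_card a₁ a₂ a₃ 0 2 1 (2 * k₂ + k₃ + 2) (by omega) (by omega) (by omega) (by omega) n hfin,
    rgf_fiber_card a₁ a₂ a₃ 0 1 2 (k₂ + 2 * k₃ + 2) (by omega) (by omega) (by omega) (by omega) n hfin,
    rgf_fiber_card a₁ a₂ a₃ 2 2 0 (2 * k₁ + 2 * k₂ + 2) (by omega) (by omega) (by omega) (by omega) n hfin,
    rgf_fiber_card a₁ a₂ a₃ 2 0 2 (2 * k₁ + 2 * k₃ + 2) (by omega) (by omega) (by omega) (by omega) n hfin,
    rgf_fiber_card a₁ a₂ a₃ 2 1 1 (2 * k₁ + k₂ + k₃ + 2) (by omega) (by omega) (by omega) (by omega) n hfin,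
    rgf_fiber_card a₁ a₂ a₃ 1 2 2 (k₁ + 2 * k₂ + 2 * k₃ + 3) (by omega) (by omega) (by omega) (by omega) n hfin]
  have h0 : (n:ℤ) - ((0:ℕ):ℤ) = (n:ℤ) := by simp
  rw [h0]
  ring
end

section
/- Let a ≥ 3 be an odd integer. Then the quotient ⟨a, a+1⟩/(a−1) equals the numerical semigroup generated by the integers (a+1)/2, (a+3)/2, ..., a−1, a (that is, all integers m with (a+1)/2 ≤ m ≤ a). -/
/-!
The additive monoid generated by an interval `[c, d]` of naturals is the union of the windows
`[q c, q d]`, `q ∈ ℕ`. For `d = c + 1` this describes `⟨a, a + 1⟩`; for `0 < c` and `2 c ≤ d + 1` consecutive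
windows overlap, so the monoid is `{0} ∪ [c, ∞)`. Now `(a - 1) m` lies in the window of index `q`
only if `q < m`, and then `(a - 1) m ≤ (m - 1)(a + 1)` forces `a + 1 ≤ 2 m`; conversely, for
`(a + 1) / 2 ≤ z ≤ a` the window of index `z - 1` contains `(a - 1) z`.
-/

namespace Nat

theorem mem_closure_Icc_iff {c d m : ℕ} :
    m ∈ AddSubmonoid.closure (Set.Icc c d) ↔ ∃ q, q * c ≤ m ∧ m ≤ q * d := by
  constructor
  · intro hm
    induction hm using AddSubmonoid.closure_induction with
    | mem z hz => exact ⟨1, by simpa using hz⟩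
    | zero => exact ⟨0, by simp⟩
    | add x y _ _ hx hy =>
      obtain ⟨q, hqx, hxq⟩ := hx
      obtain ⟨r, hry, hyr⟩ := hy
      exact ⟨q + r, by rw [add_mul]; omega, by rw [add_mul]; omega⟩
  · rintro ⟨q, hlo, hhi⟩
    induction q generalizing m with
    | zero => simp_all
    | succ q ih =>
      have hcd : c ≤ d := Nat.le_of_mul_le_mul_left (hlo.trans hhi) q.succ_pos
      rw [succ_mul] at hlo hhi
      -- split off the summand `max c (m - q d) ∈ [c, d]`; the rest lies in `[q c, q d]`
      have hrest : m - max c (m - q * d) ∈ AddSubmonoid.closure (Set.Icc c d) :=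
        ih (by have := Nat.mul_le_mul_left q hcd; omega) (by omega)
      have hgen : max c (m - q * d) ∈ AddSubmonoid.closure (Set.Icc c d) :=
        AddSubmonoid.subset_closure ⟨by omega, by omega⟩
      simpa [show max c (m - q * d) + (m - max c (m - q * d)) = m by omega] using add_mem hgen hrest

theorem mem_closure_Icc_of_two_mul_le {c d m : ℕ} (hc : 0 < c) (hcd : 2 * c ≤ d + 1)
    (hm : c ≤ m) : m ∈ AddSubmonoid.closure (Set.Icc c d) := by
  refine mem_closure_Icc_iff.mpr ⟨m / c, Nat.div_mul_le_self m c, ?_⟩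
  have hq : 1 ≤ m / c := (Nat.one_le_div_iff hc).mpr hm
  have hlt : m < m / c * c + c := Nat.lt_div_mul_add hc
  nlinarith

theorem mem_closure_pair_succ_iff {a n : ℕ} :
    n ∈ AddSubmonoid.closure ({a, a + 1} : Set ℕ) ↔ ∃ q, q * a ≤ n ∧ n ≤ q * (a + 1) := by
  have hIcc : Set.Icc a (a + 1) = {a, a + 1} := by
    ext z
    simp only [Set.mem_insert_iff, Set.mem_singleton_iff, Set.mem_Icc]
    omega
  rw [← hIcc, mem_closure_Icc_iff]

theorem pred_mul_mem_closure_pair_succ {a z : ℕ} (hz : a + 1 ≤ 2 * z) (hza : z ≤ a) :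
    (a - 1) * z ∈ AddSubmonoid.closure ({a, a + 1} : Set ℕ) := by
  obtain ⟨b, rfl⟩ : ∃ b, a = b + 1 := ⟨a - 1, by omega⟩
  obtain ⟨y, rfl⟩ : ∃ y, z = y + 1 := ⟨z - 1, by omega⟩
  exact mem_closure_pair_succ_iff.mpr ⟨y, by simp only [add_tsub_cancel_right]; nlinarith,
    by simp only [add_tsub_cancel_right]; nlinarith⟩

theorem eq_zero_or_succ_le_two_mul_of_pred_mul_mem_closure_pair_succ {a m : ℕ}
    (hm : (a - 1) * m ∈ AddSubmonoid.closure ({a, a + 1} : Set ℕ)) : m = 0 ∨ a + 1 ≤ 2 * m := by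
  obtain ⟨q, hlo, hhi⟩ := mem_closure_pair_succ_iff.mp hm
  rcases Nat.eq_zero_or_pos m with rfl | hm0
  · exact .inl rfl
  rcases a with _ | b
  · omega
  simp only [add_tsub_cancel_right] at hlo hhi
  have hqm : q + 1 ≤ m := by nlinarith
  exact .inr (by nlinarith)

end Nat

theorem quotient_a_a1_by_am1_odd_general
    (a : ℕ) (hodd : Odd a) :
    {m : ℕ | (a - 1) * m ∈ AddSubmonoid.closure ({a, a + 1} : Set ℕ)} =
      ↑(AddSubmonoid.closure (Set.Icc ((a + 1) / 2) a)) := by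
  have hc : 2 * ((a + 1) / 2) = a + 1 := Nat.two_mul_div_two_of_even hodd.add_one
  ext m
  constructor
  · intro hm
    rcases Nat.eq_zero_or_succ_le_two_mul_of_pred_mul_mem_closure_pair_succ hm with rfl | hm
    · exact AddSubmonoid.zero_mem _
    · exact Nat.mem_closure_Icc_of_two_mul_le (by omega) hc.le (by omega)
  · intro hm
    have hle : AddSubmonoid.closure (Set.Icc ((a + 1) / 2) a) ≤
        (AddSubmonoid.closure ({a, a + 1} : Set ℕ)).comap (AddMonoidHom.mulLeft (a - 1)) :=
      AddSubmonoid.closure_le.mpr fun z ⟨hlo, hhi⟩ =>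
        Nat.pred_mul_mem_closure_pair_succ (by omega) hhi
    exact hle hm

/-- Proposition 2.8 (odd case): for odd `a ≥ 3`,
`⟨a, a+1⟩/(a-1)` is generated by the integers `(a+1)/2, (a+3)/2, ..., a-1, a`. -/
theorem quotient_a_a1_by_am1_odd
    (a : ℕ) (ha : 3 ≤ a) (hodd : Odd a) :
    {m : ℕ | (a - 1) * m ∈ AddSubmonoid.closure ({a, a + 1} : Set ℕ)} =
      ↑(AddSubmonoid.closure (Set.Icc ((a + 1) / 2) a)) :=
  quotient_a_a1_by_am1_odd_general a hodd
end

section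
/- Let a ≥ 4 be an even integer. Then the quotient ⟨a, a+1⟩/(a−1) equals the numerical semigroup generated by the integers a/2 + 1, a/2 + 2, ..., a, a+1 (that is, all integers m with a/2 + 1 ≤ m ≤ a + 1). -/
/-!
Write `n = q a + r` with `r < a`. Since `x a + y (a + 1) = (x + y) a + y`, the number `n` lies in
`⟨a, a + 1⟩` iff `r ≤ q`. For `1 ≤ m ≤ a` we have `(a - 1) m = (m - 1) a + (a - m)`, so `(a - 1) m`
lies in `⟨a, a + 1⟩` iff `a - m ≤ m - 1`, i.e. iff `a / 2 < m`; for `m > a` the quotient is at least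
`a - 1` and the criterion holds. Hence the quotient is `{0} ∪ {m | a / 2 < m}`, which is also the
semigroup generated by `[k + 1, N]` for any `N ≥ 2 k + 1`: above `N`, the generator `k + 1` can be
split off repeatedly.
-/

namespace Nat

theorem mem_closure_pair_self_succ_iff {a n : ℕ} (ha : 0 < a) :
    n ∈ AddSubmonoid.closure ({a, a + 1} : Set ℕ) ↔ n % a ≤ n / a := by
  rw [AddSubmonoid.mem_closure_pair]
  constructor
  · rintro ⟨x, y, rfl⟩
    have hn : x • a + y • (a + 1) = y + a * (x + y) := by simp only [smul_eq_mul]; ring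
    rw [hn, add_mul_mod_self_left, add_mul_div_left _ _ ha]
    exact (mod_le y a).trans ((le_add_left y x).trans (le_add_left _ _))
  · intro h
    refine ⟨n / a - n % a, n % a, ?_⟩
    calc (n / a - n % a) • a + (n % a) • (a + 1) = a * (n / a) + n % a := by
          simp only [smul_eq_mul]; zify [h]; ring
      _ = n := div_add_mod n a

theorem pred_mul_mem_closure_pair_self_succ_iff (a m : ℕ) :
    (a - 1) * m ∈ AddSubmonoid.closure ({a, a + 1} : Set ℕ) ↔ m = 0 ∨ a / 2 < m := by
  rcases eq_zero_or_pos a with rfl | ha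
  · simp only [zero_tsub, zero_mul, zero_mem, true_iff]
    omega
  rw [mem_closure_pair_self_succ_iff ha]
  rcases eq_zero_or_pos m with rfl | hm
  · simp
  rcases le_or_gt m a with hma | ham
  · have hsplit : (a - 1) * m = (a - m) + a * (m - 1) := by
      zify [hm, hma, ha]; ring
    rw [hsplit, add_mul_mod_self_left, add_mul_div_left _ _ ha, mod_eq_of_lt (by omega),
      div_eq_of_lt (by omega)]
    omega
  · have hcrit : (a - 1) * m % a ≤ (a - 1) * m / a :=
      calc (a - 1) * m % a ≤ a - 1 := le_sub_one_of_lt (mod_lt _ ha)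
        _ ≤ (a - 1) * m / a := (le_div_iff_mul_le ha).2 (Nat.mul_le_mul_left _ ham.le)
    simp only [hcrit, true_iff]
    omega

theorem mem_closure_Icc_succ_iff {k N m : ℕ} (hN : 2 * k + 1 ≤ N) :
    m ∈ AddSubmonoid.closure (Set.Icc (k + 1) N) ↔ m = 0 ∨ k < m := by
  constructor
  · intro hm
    induction hm using AddSubmonoid.closure_induction with
    | mem n hn => exact Or.inr hn.1
    | zero => exact Or.inl rfl
    | add p q _ _ hp hq => omega
  · rintro (rfl | hkm)
    · exact zero_mem _
    induction m using Nat.strong_induction_on with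
    | _ m ih =>
      by_cases hmN : m ≤ N
      · exact AddSubmonoid.subset_closure ⟨hkm, hmN⟩
      · rw [← Nat.sub_add_cancel (show k + 1 ≤ m by omega)]
        exact add_mem (ih _ (by omega) (by omega))
          (AddSubmonoid.subset_closure ⟨le_rfl, by omega⟩)

end Nat

theorem quotient_a_a1_by_am1_even_general
    (a : ℕ) :
    {m : ℕ | (a - 1) * m ∈ AddSubmonoid.closure ({a, a + 1} : Set ℕ)} =
      ↑(AddSubmonoid.closure (Set.Icc (a / 2 + 1) (a + 1))) := by
  ext m
  rw [Set.mem_ofPred_eq, SetLike.mem_coe, Nat.pred_mul_mem_closure_pair_self_succ_iff,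
    Nat.mem_closure_Icc_succ_iff (by omega)]

/-- Proposition 2.8 (even case): for even `a ≥ 4`,
`⟨a, a+1⟩/(a-1)` is generated by the integers `a/2 + 1, a/2 + 2, ..., a, a+1`. -/
theorem quotient_a_a1_by_am1_even
    (a : ℕ) (ha : 4 ≤ a) (heven : Even a) :
    {m : ℕ | (a - 1) * m ∈ AddSubmonoid.closure ({a, a + 1} : Set ℕ)} =
      ↑(AddSubmonoid.closure (Set.Icc (a / 2 + 1) (a + 1))) :=
  quotient_a_a1_by_am1_even_general a
end

section
/- Let a ≥ 3 be an odd integer. For an integer m let d(m) be the number of pairs (u, v) ∈ ℕ² with a·u + (a+1)·v = m, and let e(m) be the number of pairs (u, v) ∈ ℕ² with a·u + ((a+1)/2)·v = m (both 0 for m < 0). Then for every n ∈ ℕ, d((a−1)·n) = e(n) + Σ_{j=(a+3)/2}^{a−1} e(n − j). -/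
open Finset

private lemma denum_card (x y m : ℤ) (hx : 1 ≤ x) (hy : 1 ≤ y) (N : ℕ) (hN : m ≤ (N : ℤ)) :
    Set.ncard {q : ℕ × ℕ | (q.1 : ℤ) * x + (q.2 : ℤ) * y = m} =
    (((range (N+1)) ×ˢ (range (N+1))).filter
      (fun q : ℕ × ℕ => (q.1 : ℤ) * x + (q.2 : ℤ) * y = m)).card := by
  classical
  rw [← Set.ncard_coe_finset]
  congr 1
  ext ⟨u, v⟩
  simp only [Finset.coe_filter, Finset.mem_product, Finset.mem_range, Set.mem_setOf_eq]
  constructor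
  · intro h
    have hu0 : (0:ℤ) ≤ (u:ℤ) := by positivity
    have hv0 : (0:ℤ) ≤ (v:ℤ) := by positivity
    have hu : (u:ℤ) ≤ m := by nlinarith
    have hv : (v:ℤ) ≤ m := by nlinarith
    exact ⟨⟨by omega, by omega⟩, h⟩
  · exact fun h => h.2

private lemma step1 (k n : ℕ) (hk : 1 ≤ k) :
    ((range (2*k*n+1) ×ˢ range (2*k*n+1)).filter
      (fun q : ℕ × ℕ => (q.1:ℤ)*(2*(k:ℤ)+1) + (q.2:ℤ)*(2*(k:ℤ)+2) = 2*(k:ℤ)*(n:ℤ))).card =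
    ((range (n+1)).filter (fun t => (k+1)*t ≤ n ∧ n ≤ (2*k+1)*t)).card := by
  refine Finset.card_bij' (fun q _ => n - q.1 - q.2)
      (fun t _ => (2*(n - (k+1)*t), (2*k+1)*t - n)) ?_ ?_ ?_ ?_
  · rintro ⟨u, v⟩ hq
    simp only [Finset.mem_filter, Finset.mem_product, Finset.mem_range] at hq ⊢
    obtain ⟨-, heq⟩ := hq
    have h1 : ((u:ℤ)+v) * (2*(k:ℤ)+1) = 2*(k:ℤ)*n - v := by linear_combination heq
    have h3 : ((u:ℤ)+v) * (2*(k:ℤ)+1) ≤ (n:ℤ) * (2*(k:ℤ)+1) := by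
      have := Int.natCast_nonneg v
      have := Int.natCast_nonneg n
      nlinarith
    have h2 : (u:ℤ) + v ≤ (n:ℤ) := le_of_mul_le_mul_right h3 (by positivity)
    have huv : u + v ≤ n := by exact_mod_cast h2
    set t := n - u - v with htdef
    have ht : (t:ℤ) = (n:ℤ) - u - v := by omega
    have hu : (u:ℤ) = 2*((n:ℤ) - ((k:ℤ)+1)*(t:ℤ)) := by
      linear_combination -heq + (2*(k:ℤ)+2) * ht
    have hv : (v:ℤ) = (2*(k:ℤ)+1)*(t:ℤ) - n := by
      linear_combination heq - (2*(k:ℤ)+1) * ht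
    refine ⟨by omega, ?_, ?_⟩
    · zify
      have := Int.natCast_nonneg u
      linarith
    · zify
      have := Int.natCast_nonneg v
      linarith
  · rintro t ht
    simp only [Finset.mem_filter, Finset.mem_product, Finset.mem_range] at ht ⊢
    obtain ⟨htn, h1, h2⟩ := ht
    have e1 : (k+1)*t = k*t + t := by ring
    have e2 : (2*k+1)*t = 2*(k*t) + t := by ring
    have e3 : 2*k*n = 2*(k*n) := by ring
    have hktn : k*t ≤ k*n := Nat.mul_le_mul_left _ (by omega)
    refine ⟨⟨?_, ?_⟩, ?_⟩
    · rw [e1, e3]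
      rw [e2] at h2
      generalize k*t = A at hktn h2 ⊢
      generalize k*n = B at hktn ⊢
      omega
    · rw [e2, e3]
      rw [e2] at h2
      generalize k*t = A at hktn h2 ⊢
      generalize k*n = B at hktn ⊢
      omega
    · zify [h1, h2]
      ring
  · rintro ⟨u, v⟩ hq
    simp only [Finset.mem_filter, Finset.mem_product, Finset.mem_range] at hq
    obtain ⟨-, heq⟩ := hq
    have h1 : ((u:ℤ)+v) * (2*(k:ℤ)+1) = 2*(k:ℤ)*n - v := by linear_combination heq
    have h3 : ((u:ℤ)+v) * (2*(k:ℤ)+1) ≤ (n:ℤ) * (2*(k:ℤ)+1) := by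
      have := Int.natCast_nonneg v
      have := Int.natCast_nonneg n
      nlinarith
    have h2 : (u:ℤ) + v ≤ (n:ℤ) := le_of_mul_le_mul_right h3 (by positivity)
    have huv : u + v ≤ n := by exact_mod_cast h2
    set t := n - u - v with htdef
    have ht : (t:ℤ) = (n:ℤ) - u - v := by omega
    have hu : (u:ℤ) = 2*((n:ℤ) - ((k:ℤ)+1)*(t:ℤ)) := by
      linear_combination -heq + (2*(k:ℤ)+2) * ht
    have hv : (v:ℤ) = (2*(k:ℤ)+1)*(t:ℤ) - n := by
      linear_combination heq - (2*(k:ℤ)+1) * ht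
    have hle1 : (k+1)*t ≤ n := by
      zify; have := Int.natCast_nonneg u; linarith
    have hle2 : n ≤ (2*k+1)*t := by
      zify; have := Int.natCast_nonneg v; linarith
    have c1 : 2*(n - (k+1)*t) = u := by zify [hle1]; linarith
    have c2 : (2*k+1)*t - n = v := by zify [hle2]; linarith
    show (2*(n - (k+1)*(n - u - v)), (2*k+1)*(n - u - v) - n) = (u, v)
    rw [← htdef, c1, c2]
  · rintro t ht
    simp only [Finset.mem_filter, Finset.mem_range] at ht
    obtain ⟨htn, h1, h2⟩ := ht
    have e1 : (k+1)*t = k*t + t := by ring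
    have e2 : (2*k+1)*t = 2*(k*t) + t := by ring
    show n - 2*(n - (k+1)*t) - ((2*k+1)*t - n) = t
    rw [e1, e2]
    rw [e1] at h1
    rw [e2] at h2
    generalize k*t = A at h1 h2 ⊢
    omega

private lemma step2 (k n : ℕ) (hk : 1 ≤ k) :
    ((range (n+1)).filter (fun t => (k+1)*t ≤ n ∧ n ≤ (2*k+1)*t)).card =
    ((insert 0 (Finset.Icc (k+2) (2*k))).sigma (fun j =>
      ((range (n+1) ×ˢ range (n+1)).filter
        (fun q : ℕ×ℕ => (q.1:ℤ)*(2*(k:ℤ)+1) + (q.2:ℤ)*((k:ℤ)+1) = (n:ℤ) - (j:ℤ))))).card := by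
  have kpos : 0 < k := hk
  refine Finset.card_bij'
    (fun t _ => if (n - (k+1)*t) % k = 0
      then ⟨0, ((n - (k+1)*t)/k, t - (n - (k+1)*t)/k)⟩
      else ⟨k+1+(n - (k+1)*t) % k, ((n - (k+1)*t)/k, t - 1 - (n - (k+1)*t)/k)⟩)
    (fun x _ => if x.1 = 0 then x.2.1 + x.2.2 else x.2.1 + x.2.2 + 1) ?_ ?_ ?_ ?_
  · rintro t ht
    simp only [Finset.mem_filter, Finset.mem_range] at ht
    obtain ⟨htn, h1, h2⟩ := ht
    set r := n - (k+1)*t with hrdef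
    have hr' : r + (k+1)*t = n := Nat.sub_add_cancel h1
    have hrZ : (r:ℤ) = (n:ℤ) - ((k:ℤ)+1)*t := by
      have := congrArg (fun m : ℕ => (m:ℤ)) hr'
      push_cast at this
      linarith
    have hrk : r ≤ k*t := by
      apply Nat.sub_le_iff_le_add.mpr
      calc n ≤ (2*k+1)*t := h2
      _ = k*t + (k+1)*t := by ring
    have hdm : k * (r/k) + r % k = r := Nat.div_add_mod r k
    have hmod : r % k < k := Nat.mod_lt _ kpos
    have hpr : r/k ≤ r := Nat.div_le_self _ _
    have hrn : r ≤ n := Nat.sub_le _ _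
    set p := r/k with hpdef
    set ρ := r % k with hρdef
    clear_value ρ
    clear_value p
    clear_value r
    have hdmZ : (k:ℤ)*p + ρ = r := by exact_mod_cast hdm
    have hkpr : k*p ≤ r := Nat.le.intro hdm
    have hkpt : k*p ≤ k*t := le_trans hkpr hrk
    simp only [Finset.mem_sigma, Finset.mem_insert, Finset.mem_Icc, Finset.mem_filter,
      Finset.mem_product, Finset.mem_range]
    split_ifs with hρ
    · dsimp only
      have hpt : p ≤ t := Nat.le_of_mul_le_mul_left hkpt kpos
      have hρZ : (ρ:ℤ) = 0 := by exact_mod_cast hρ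
      have hc : ((t - p : ℕ):ℤ) = (t:ℤ) - p := by omega
      refine ⟨Or.inl rfl, ⟨by omega, by omega⟩, ?_⟩
      push_cast
      rw [hc]
      linear_combination hdmZ + hrZ - hρZ
    · dsimp only
      have hρ1 : 1 ≤ ρ := Nat.one_le_iff_ne_zero.mpr hρ
      have hkpt' : k*p < k*t := by omega
      have hpt : p < t := Nat.lt_of_mul_lt_mul_left hkpt'
      have hc : ((t - 1 - p : ℕ):ℤ) = (t:ℤ) - 1 - p := by omega
      refine ⟨Or.inr ⟨by omega, by omega⟩, ⟨by omega, by omega⟩, ?_⟩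
      push_cast
      rw [hc]
      linear_combination hdmZ + hrZ
  · rintro ⟨j, p, q⟩ hx
    simp only [Finset.mem_sigma, Finset.mem_insert, Finset.mem_Icc, Finset.mem_filter,
      Finset.mem_product, Finset.mem_range] at hx
    obtain ⟨hj, ⟨hp, hq⟩, heq⟩ := hx
    simp only [Finset.mem_filter, Finset.mem_range]
    have hkp0 : (0:ℤ) ≤ (k:ℤ)*p := by positivity
    have hkq0 : (0:ℤ) ≤ (k:ℤ)*q := by positivity
    split_ifs with h0
    · subst h0
      have e1 : ((k:ℤ))*p = (n:ℤ) - ((k:ℤ)+1)*((p:ℤ)+q) := by push_cast at heq; linear_combination heq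
      have e2 : ((k:ℤ))*q = (2*(k:ℤ)+1)*((p:ℤ)+q) - n := by push_cast at heq; linear_combination -heq
      have hle1 : (k+1)*(p+q) ≤ n := by zify; linarith
      have hle2 : n ≤ (2*k+1)*(p+q) := by zify; linarith
      have := le_trans (Nat.le_mul_of_pos_left (p+q) (by omega : 0 < k+1)) hle1
      exact ⟨by omega, hle1, hle2⟩
    · have hjj := hj.resolve_left h0
      obtain ⟨hj1, hj2⟩ := hjj
      have hjZ1 : (k:ℤ)+2 ≤ (j:ℤ) := by exact_mod_cast hj1
      have hjZ2 : (j:ℤ) ≤ 2*(k:ℤ) := by exact_mod_cast hj2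
      have e1 : ((k:ℤ))*p + ((j:ℤ) - (k:ℤ) - 1) = (n:ℤ) - ((k:ℤ)+1)*((p:ℤ)+q+1) := by
        linear_combination heq
      have e2 : ((k:ℤ))*q + (2*(k:ℤ)+1-(j:ℤ)) = (2*(k:ℤ)+1)*((p:ℤ)+q+1) - n := by
        linear_combination -heq
      have hle1 : (k+1)*(p+q+1) ≤ n := by zify; linarith
      have hle2 : n ≤ (2*k+1)*(p+q+1) := by zify; linarith
      have := le_trans (Nat.le_mul_of_pos_left (p+q+1) (by omega : 0 < k+1)) hle1
      exact ⟨by omega, hle1, hle2⟩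
  · rintro t ht
    simp only [Finset.mem_filter, Finset.mem_range] at ht
    obtain ⟨htn, h1, h2⟩ := ht
    set r := n - (k+1)*t with hrdef
    have hrk : r ≤ k*t := by
      apply Nat.sub_le_iff_le_add.mpr
      calc n ≤ (2*k+1)*t := h2
      _ = k*t + (k+1)*t := by ring
    have hdm : k * (r/k) + r % k = r := Nat.div_add_mod r k
    set p := r/k with hpdef
    set ρ := r % k with hρdef
    clear_value ρ
    clear_value p
    clear_value r
    have hkpr : k*p ≤ r := Nat.le.intro hdm
    have hkpt : k*p ≤ k*t := le_trans hkpr hrk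
    split_ifs with hρ hc hc
    · have hpt : p ≤ t := Nat.le_of_mul_le_mul_left hkpt kpos
      dsimp only
      omega
    · exact absurd rfl hc
    · exfalso
      dsimp only at hc
      omega
    · have hρ1 : 1 ≤ ρ := Nat.one_le_iff_ne_zero.mpr hρ
      have hkpt' : k*p < k*t := by omega
      have hpt : p < t := Nat.lt_of_mul_lt_mul_left hkpt'
      dsimp only
      omega
  · rintro ⟨j, p, q⟩ hx
    simp only [Finset.mem_sigma, Finset.mem_insert, Finset.mem_Icc, Finset.mem_filter,
      Finset.mem_product, Finset.mem_range] at hx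
    obtain ⟨hj, ⟨hp, hq⟩, heq⟩ := hx
    dsimp only
    rcases hj with h0 | ⟨hj1, hj2⟩
    · subst h0
      rw [if_pos rfl]
      have h' : k*p + (k+1)*(p+q) = n := by
        zify
        push_cast at heq
        linear_combination heq
      have hr : n - (k+1)*(p+q) = k*p := by omega
      rw [hr, Nat.mul_mod_right, if_pos rfl, Nat.mul_div_cancel_left _ kpos]
      have c2 : p + q - p = q := by omega
      rw [c2]
    · rw [if_neg (by omega : ¬ j = 0)]
      have h' : k*p + (j - (k+1)) + (k+1)*(p+q+1) = n := by
        zify [show k+1 ≤ j by omega]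
        linear_combination heq
      have hr : n - (k+1)*(p+q+1) = k*p + (j - (k+1)) := by omega
      have hρlt : j - (k+1) < k := by omega
      have hρne : ¬ ((j - (k+1)) % k = 0) := by
        rw [Nat.mod_eq_of_lt hρlt]; omega
      rw [hr, Nat.mul_add_mod, if_neg hρne, Nat.mul_add_div kpos,
        Nat.div_eq_of_lt hρlt, Nat.mod_eq_of_lt hρlt]
      have c1 : k+1+(j-(k+1)) = j := by omega
      have c2 : p + 0 = p := by omega
      have c3 : p+q+1-1-(p+0) = q := by omega
      rw [c1, c3, c2]

/-- The RGF identity for `⟨a, a+1⟩/(a-1)` with `a ≥ 3` odd: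
`d((a−1)n) = e(n) + ∑_{j=(a+3)/2}^{a−1} e(n − j)`, where `d` is the denumerant
for `(a, a+1)` and `e` the denumerant for `(a, (a+1)/2)`. -/
theorem rgf_identity_a_a1_odd
    (a : ℕ) (ha : 3 ≤ a) (hodd : Odd a)
    (d e : ℤ → ℕ)
    (hd : ∀ m : ℤ, d m =
      Set.ncard {q : ℕ × ℕ | (q.1 : ℤ) * a + (q.2 : ℤ) * (a + 1) = m})
    (he : ∀ m : ℤ, e m =
      Set.ncard {q : ℕ × ℕ | (q.1 : ℤ) * a + (q.2 : ℤ) * (((a + 1) / 2 : ℕ)) = m}) :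
    ∀ n : ℕ, d ((a - 1 : ℕ) * n) =
      e n + ∑ j ∈ Finset.Icc ((a + 3) / 2) (a - 1), e ((n : ℤ) - (j : ℕ)) := by
  obtain ⟨k, hk⟩ := hodd
  subst hk
  have hk1 : 1 ≤ k := by omega
  intro n
  rw [show (2*k+1+1)/2 = k+1 from by omega] at he
  rw [show (2*k+1+3)/2 = k+2 from by omega, show 2*k+1-1 = 2*k from by omega]
  have hxz : (1:ℤ) ≤ ((2*k+1 : ℕ) : ℤ) := by push_cast; omega
  -- the `E j` finsets
  set E : ℕ → Finset (ℕ × ℕ) := fun j =>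
    ((range (n+1) ×ˢ range (n+1)).filter
      (fun q : ℕ×ℕ => (q.1:ℤ)*(2*(k:ℤ)+1) + (q.2:ℤ)*((k:ℤ)+1) = (n:ℤ) - (j:ℤ))) with hE
  have heE : ∀ j : ℕ, e ((n:ℤ) - (j:ℕ)) = (E j).card := by
    intro j
    rw [he, denum_card _ _ _ hxz (by push_cast; omega) n
      (by push_cast; omega), hE]
    all_goals
      refine congrArg Finset.card (Finset.filter_congr ?_)
      intro q _
      push_cast
      constructor <;> intro h <;> linarith
  have heE0 : e (n:ℤ) = (E 0).card := by
    have := heE 0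
    push_cast at this
    simpa using this
  have hdL : d (((2*k : ℕ):ℤ) * (n:ℤ)) = ((range (2*k*n+1) ×ˢ range (2*k*n+1)).filter
      (fun q : ℕ × ℕ => (q.1:ℤ)*(2*(k:ℤ)+1) + (q.2:ℤ)*(2*(k:ℤ)+2) = 2*(k:ℤ)*(n:ℤ))).card := by
    rw [hd, denum_card _ _ _ hxz (by push_cast; omega) (2*k*n)
      (le_of_eq (by push_cast; ring))]
    all_goals
      refine congrArg Finset.card (Finset.filter_congr ?_)
      intro q _
      push_cast
      constructor <;> intro h <;> linarith
  rw [hdL, step1 k n hk1, step2 k n hk1, Finset.card_sigma,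
    Finset.sum_insert (by simp), heE0]
  congr 1
  exact Finset.sum_congr rfl (fun j _ => (heE j).symm)
end

section
/- Let a ≥ 4 be an even integer. For an integer m let d(m) be the number of pairs (u, v) ∈ ℕ² with a·u + (a+1)·v = m (with d(m) = 0 for m < 0). Then for every n ∈ ℕ, d((a−1)·n) = d(n) + Σ_{j=0}^{a/2 − 2} ( d(n − (a+2)/2 − j) + d(n − (a+2) − j) ). -/
open Finset

/-- Finset of solutions (u,v) to u*a + v*(a+1) = m. -/
def rgfSolF (a : ℕ) (m : ℤ) : Finset (ℕ × ℕ) :=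
  (Finset.range (m.toNat + 1) ×ˢ Finset.range (m.toNat + 1)).filter
    fun q => (q.1 : ℤ) * a + (q.2 : ℤ) * (a + 1) = m

lemma rgf_mem_solF {a : ℕ} (ha : 1 ≤ a) {m : ℤ} {q : ℕ × ℕ} :
    q ∈ rgfSolF a m ↔ (q.1 : ℤ) * a + (q.2 : ℤ) * (a + 1) = m := by
  simp only [rgfSolF, Finset.mem_filter, Finset.mem_product, Finset.mem_range]
  constructor
  · rintro ⟨-, h⟩; exact h
  · intro h
    have h1 : (q.1 : ℤ) ≤ (q.1 : ℤ) * a := by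
      nlinarith [Int.ofNat_nonneg q.1, (by exact_mod_cast ha : (1:ℤ) ≤ (a:ℤ))]
    have h2 : (q.2 : ℤ) ≤ (q.2 : ℤ) * (a+1) := by
      nlinarith [Int.ofNat_nonneg q.2, (by exact_mod_cast ha : (1:ℤ) ≤ (a:ℤ))]
    have h3 : (0:ℤ) ≤ (q.1 : ℤ) * a := by positivity
    have h4 : (0:ℤ) ≤ (q.2 : ℤ) * (a+1) := by positivity
    refine ⟨⟨?_, ?_⟩, h⟩ <;> omega

lemma rgf_ncard {a : ℕ} (ha : 1 ≤ a) (m : ℤ) :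
    Set.ncard {q : ℕ × ℕ | (q.1 : ℤ) * a + (q.2 : ℤ) * (a + 1) = m}
      = (rgfSolF a m).card := by
  rw [show {q : ℕ × ℕ | (q.1 : ℤ) * a + (q.2 : ℤ) * (a + 1) = m} = ↑(rgfSolF a m) from ?_,
    Set.ncard_coe_finset]
  ext q
  simp [rgf_mem_solF ha, Set.mem_setOf_eq]

lemma rgf_D_neg {a : ℕ} (ha : 1 ≤ a) {m : ℤ} (hm : m < 0) : (rgfSolF a m).card = 0 := by
  rw [Finset.card_eq_zero, Finset.eq_empty_iff_forall_notMem]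
  intro q hq
  rw [rgf_mem_solF ha] at hq
  have h3 : (0:ℤ) ≤ (q.1 : ℤ) * a := by positivity
  have h4 : (0:ℤ) ≤ (q.2 : ℤ) * (a+1) := by positivity
  omega

lemma rgf_shift_u {a : ℕ} (ha : 1 ≤ a) (k : ℕ) (m : ℤ) :
    ((rgfSolF a m).filter fun q => k ≤ q.1).card = (rgfSolF a (m - k * a)).card := by
  refine Finset.card_bij' (fun q _ => (q.1 - k, q.2)) (fun q _ => (q.1 + k, q.2)) ?_ ?_ ?_ ?_
  · rintro ⟨u, v⟩ hq
    simp only [Finset.mem_filter, rgf_mem_solF ha] at hq ⊢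
    obtain ⟨heq, hk⟩ := hq
    have hc : ((u - k : ℕ) : ℤ) = (u : ℤ) - k := by push_cast; omega
    rw [hc]
    linear_combination heq
  · rintro ⟨u, v⟩ hq
    simp only [Finset.mem_filter, rgf_mem_solF ha] at hq ⊢
    refine ⟨?_, by omega⟩
    push_cast
    linear_combination hq
  all_goals
    rintro ⟨u, v⟩ hq
    simp_all [Prod.ext_iff]
    try omega

lemma rgf_shift_v_bdd {a : ℕ} (ha : 1 ≤ a) (k b : ℕ) (m : ℤ) :
    ((rgfSolF a m).filter fun q => q.1 ≤ b ∧ k ≤ q.2).card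
      = ((rgfSolF a (m - k * (a + 1))).filter fun q => q.1 ≤ b).card := by
  refine Finset.card_bij' (fun q _ => (q.1, q.2 - k)) (fun q _ => (q.1, q.2 + k)) ?_ ?_ ?_ ?_
  · rintro ⟨u, v⟩ hq
    simp only [Finset.mem_filter, rgf_mem_solF ha] at hq ⊢
    obtain ⟨heq, hb, hk⟩ := hq
    have hc : ((v - k : ℕ) : ℤ) = (v : ℤ) - k := by omega
    refine ⟨?_, hb⟩
    rw [hc]
    linear_combination heq
  · rintro ⟨u, v⟩ hq
    simp only [Finset.mem_filter, rgf_mem_solF ha] at hq ⊢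
    refine ⟨?_, hq.2, by omega⟩
    push_cast
    linear_combination hq.1
  all_goals
    rintro ⟨u, v⟩ hq
    simp only [Finset.mem_filter] at hq
    simp_all [Prod.ext_iff]
    try omega

/-- Indicator: `m ≥ 0` and `(a+1) ∣ m`. -/
def rgfE (a : ℕ) (m : ℤ) : ℕ := if 0 ≤ m ∧ ((a : ℤ) + 1) ∣ m then 1 else 0

lemma rgf_u0 {a : ℕ} (ha : 1 ≤ a) (m : ℤ) :
    ((rgfSolF a m).filter fun q => q.1 < 1).card = rgfE a m := by
  have ha1 : (0:ℤ) < (a:ℤ) + 1 := by positivity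
  unfold rgfE
  split_ifs with h
  · obtain ⟨hm, c, hc⟩ := h
    have hc0 : 0 ≤ c := by nlinarith
    have hset : (rgfSolF a m).filter (fun q => q.1 < 1) = {(0, c.toNat)} := by
      ext ⟨u, v⟩
      simp only [Finset.mem_filter, rgf_mem_solF ha, Finset.mem_singleton, Prod.mk.injEq]
      constructor
      · rintro ⟨heq, hu⟩
        have hu0 : u = 0 := by omega
        subst hu0
        simp only [Nat.cast_zero, zero_mul, zero_add] at heq
        have hv : (v : ℤ) = c := by
          have hane : ((a:ℤ)+1) ≠ 0 := by positivity
          have : (v:ℤ) * ((a:ℤ)+1) = c * ((a:ℤ)+1) := by linarith [hc, heq]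
          exact mul_right_cancel₀ hane this
        constructor
        · rfl
        · omega
      · rintro ⟨hu, hv⟩
        subst hu; subst hv
        have hcast : ((c.toNat : ℤ)) = c := by omega
        constructor
        · simp only [Nat.cast_zero, zero_mul, zero_add, hcast]
          linarith [hc]
        · omega
    rw [hset, Finset.card_singleton]
  · rw [Finset.card_eq_zero, Finset.eq_empty_iff_forall_notMem]
    rintro ⟨u, v⟩ hq
    simp only [Finset.mem_filter, rgf_mem_solF ha] at hq
    obtain ⟨heq, hu⟩ := hq
    have hu0 : u = 0 := by omega
    subst hu0
    simp only [Nat.cast_zero, zero_mul, zero_add] at heq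
    have hnn : (0:ℤ) ≤ (v:ℤ) * ((a:ℤ)+1) := by positivity
    exact h ⟨by omega, ⟨v, by linarith [heq]⟩⟩

lemma rgf_step_u {a : ℕ} (ha : 1 ≤ a) (m : ℤ) :
    (rgfSolF a m).card = (rgfSolF a (m - a)).card + rgfE a m := by
  have hpart := Finset.card_filter_add_card_filter_not
    (s := rgfSolF a m) (p := fun q : ℕ × ℕ => 1 ≤ q.1)
  have h1 := rgf_shift_u ha 1 m
  have h2 := rgf_u0 ha m
  have hneg : ((rgfSolF a m).filter fun q => ¬ 1 ≤ q.1)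
      = (rgfSolF a m).filter fun q => q.1 < 1 := by
    apply Finset.filter_congr
    intro q _
    simp
  rw [hneg, h1, h2] at hpart
  simp only [Nat.cast_one, one_mul] at hpart
  omega

lemma rgf_key4 {a : ℕ} (ha : 1 ≤ a) (m : ℤ) :
    (rgfSolF a m).card + (rgfSolF a (m - (2 * a + 1))).card
      = (rgfSolF a (m - a)).card + (rgfSolF a (m - (a + 1))).card
        + (if m = 0 then 1 else 0) := by
  have ha1 : (0:ℤ) < (a:ℤ) + 1 := by positivity
  have s1 := rgf_step_u ha m
  have s2 := rgf_step_u ha (m - ((a:ℤ) + 1))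
  have harg : m - ((a:ℤ)+1) - a = m - (2*a+1) := by ring
  rw [harg] at s2
  have he : rgfE a m = rgfE a (m - ((a:ℤ)+1)) + (if m = 0 then 1 else 0) := by
    unfold rgfE
    by_cases h0 : m = 0
    · subst h0
      rw [if_pos ⟨le_refl 0, dvd_zero _⟩, if_pos rfl, if_neg]
      rintro ⟨hh, -⟩
      omega
    · rw [if_neg h0]
      by_cases h1 : 0 ≤ m ∧ ((a:ℤ)+1) ∣ m
      · have hm : (a:ℤ)+1 ≤ m := Int.le_of_dvd (lt_of_le_of_ne h1.1 (Ne.symm h0)) h1.2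
        have hd2 : ((a:ℤ)+1) ∣ m - ((a:ℤ)+1) := dvd_sub h1.2 dvd_rfl
        rw [if_pos h1, if_pos ⟨by omega, hd2⟩]
      · rw [if_neg h1, if_neg]
        rintro ⟨h2a, h2b⟩
        refine h1 ⟨by omega, ?_⟩
        have : m = (m - ((a:ℤ)+1)) + ((a:ℤ)+1) := by ring
        rw [this]
        exact dvd_add h2b (dvd_refl _)
  omega

/-- The "kick" indicator `χ`. -/
def rgfChi (a : ℕ) (n : ℤ) : ℕ :=
  (if n = 0 then 1 else 0) +
  (if (((a+2)/2 : ℕ) : ℤ) ≤ n ∧ n < (((a+2)/2 : ℕ) : ℤ) + ((a/2 - 1 : ℕ) : ℤ) then 1 else 0) +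
  (if (a:ℤ) + 2 ≤ n ∧ n < (a:ℤ) + 2 + ((a/2 - 1 : ℕ) : ℤ) then 1 else 0)

lemma rgf_box_char {a : ℕ} (ha : 4 ≤ a) (heven : Even a) {n : ℤ} {u v : ℕ}
    (heq : (u:ℤ) * a + (v:ℤ) * ((a:ℤ)+1) = ((a:ℤ)-1) * n)
    (hu : u ≤ a - 2) (hv : v ≤ a - 2) :
    (n = 0 ∧ u = 0 ∧ v = 0)
    ∨ (((a:ℤ)/2 + 1 ≤ n ∧ n ≤ (a:ℤ) - 1) ∧ (u:ℤ) = 2*n - a - 1 ∧ (v:ℤ) = (a:ℤ) - n)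
    ∨ (((a:ℤ) + 2 ≤ n ∧ n ≤ (a:ℤ) + (a:ℤ)/2) ∧ (u:ℤ) = 2*n - 2*a - 2 ∧ (v:ℤ) = 2*(a:ℤ) - n) := by
  obtain ⟨b, hb⟩ := heven
  have ha4 : (4:ℤ) ≤ (a:ℤ) := by exact_mod_cast ha
  have huZ : (u:ℤ) ≤ (a:ℤ) - 2 := by omega
  have hvZ : (v:ℤ) ≤ (a:ℤ) - 2 := by omega
  have h3 : (u:ℤ) + 2*v = ((a:ℤ)-1) * (n - u - v) := by linear_combination heq
  have hk0 : 0 ≤ n - (u:ℤ) - v := by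
    by_contra h'
    push_neg at h'
    have h4 := mul_le_mul_of_nonneg_left (show n - (u:ℤ) - v ≤ -1 by omega)
      (show (0:ℤ) ≤ (a:ℤ) - 1 by omega)
    have h5 : (0:ℤ) ≤ (u:ℤ) + 2*v := by positivity
    omega
  have hk2 : n - (u:ℤ) - v ≤ 2 := by
    by_contra h'
    push_neg at h'
    have h4 := mul_le_mul_of_nonneg_left (show (3:ℤ) ≤ n - (u:ℤ) - v by omega)
      (show (0:ℤ) ≤ (a:ℤ) - 1 by omega)
    omega
  have hbz : (a:ℤ) = (b:ℤ) + (b:ℤ) := by exact_mod_cast hb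
  rcases (show n - (u:ℤ) - v = 0 ∨ n - (u:ℤ) - v = 1 ∨ n - (u:ℤ) - v = 2 by omega) with h | h | h <;>
    rw [h] at h3 <;> omega

lemma rgf_key_count {a : ℕ} (ha : 4 ≤ a) (heven : Even a) (n : ℤ) :
    ((rgfSolF a (((a:ℤ)-1)*n)).filter fun q => q.1 ≤ a - 2 ∧ q.2 ≤ a - 2).card
      = rgfChi a n := by
  have ha1 : 1 ≤ a := by omega
  have ha4Z : (4:ℤ) ≤ (a:ℤ) := by exact_mod_cast ha
  obtain ⟨b, hb⟩ := id heven
  have hbz : (a:ℤ) = (b:ℤ) + (b:ℤ) := by exact_mod_cast hb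
  by_cases h0 : n = 0
  · subst h0
    have hset : ((rgfSolF a (((a:ℤ)-1)*0)).filter fun q => q.1 ≤ a - 2 ∧ q.2 ≤ a - 2)
        = {((0:ℕ), (0:ℕ))} := by
      ext ⟨u, v⟩
      simp only [Finset.mem_filter, rgf_mem_solF ha1, Finset.mem_singleton, Prod.mk.injEq]
      constructor
      · rintro ⟨heq, hu, hv⟩
        have h1 : (0:ℤ) ≤ (u:ℤ) * a := by positivity
        have h2 : (0:ℤ) ≤ (v:ℤ) * ((a:ℤ)+1) := by positivity
        have h3 : (u:ℤ) * a ≥ (u:ℤ) := by nlinarith [Int.ofNat_nonneg u]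
        have h4 : (v:ℤ) * ((a:ℤ)+1) ≥ (v:ℤ) := by nlinarith [Int.ofNat_nonneg v]
        constructor <;> omega
      · rintro ⟨h1, h2⟩
        subst h1; subst h2
        norm_num
    rw [hset, Finset.card_singleton]
    simp only [rgfChi]
    split_ifs <;> omega
  · by_cases h1 : (((a+2)/2 : ℕ) : ℤ) ≤ n ∧ n < (((a+2)/2 : ℕ) : ℤ) + ((a/2 - 1 : ℕ) : ℤ)
    · have hset : ((rgfSolF a (((a:ℤ)-1)*n)).filter fun q => q.1 ≤ a - 2 ∧ q.2 ≤ a - 2)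
          = {((2*n - a - 1).toNat, ((a:ℤ) - n).toNat)} := by
        ext ⟨u, v⟩
        simp only [Finset.mem_filter, rgf_mem_solF ha1, Finset.mem_singleton, Prod.mk.injEq]
        constructor
        · rintro ⟨heq, hu, hv⟩
          rcases rgf_box_char ha heven heq hu hv with ⟨hn, -⟩ | ⟨-, hu', hv'⟩ | ⟨⟨hn, -⟩, -⟩ <;>
            constructor <;> omega
        · rintro ⟨hu, hv⟩
          subst hu; subst hv
          have hcu : (((2*n - (a:ℤ) - 1).toNat : ℤ)) = 2*n - (a:ℤ) - 1 := by omega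
          have hcv : ((((a:ℤ) - n).toNat : ℤ)) = (a:ℤ) - n := by omega
          refine ⟨?_, by omega, by omega⟩
          rw [hcu, hcv]
          ring
      rw [hset, Finset.card_singleton]
      simp only [rgfChi]
      split_ifs <;> omega
    · by_cases h2 : (a:ℤ) + 2 ≤ n ∧ n < (a:ℤ) + 2 + ((a/2 - 1 : ℕ) : ℤ)
      · have hset : ((rgfSolF a (((a:ℤ)-1)*n)).filter fun q => q.1 ≤ a - 2 ∧ q.2 ≤ a - 2)
            = {((2*n - 2*a - 2).toNat, (2*(a:ℤ) - n).toNat)} := by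
          ext ⟨u, v⟩
          simp only [Finset.mem_filter, rgf_mem_solF ha1, Finset.mem_singleton, Prod.mk.injEq]
          constructor
          · rintro ⟨heq, hu, hv⟩
            rcases rgf_box_char ha heven heq hu hv with ⟨hn, -⟩ | ⟨⟨hn, hn'⟩, -⟩ | ⟨-, hu', hv'⟩ <;>
              constructor <;> omega
          · rintro ⟨hu, hv⟩
            subst hu; subst hv
            have hcu : (((2*n - 2*(a:ℤ) - 2).toNat : ℤ)) = 2*n - 2*(a:ℤ) - 2 := by omega
            have hcv : (((2*(a:ℤ) - n).toNat : ℤ)) = 2*(a:ℤ) - n := by omega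
            refine ⟨?_, by omega, by omega⟩
            rw [hcu, hcv]
            ring
        rw [hset, Finset.card_singleton]
        simp only [rgfChi]
        split_ifs <;> omega
      · have hset : ((rgfSolF a (((a:ℤ)-1)*n)).filter fun q => q.1 ≤ a - 2 ∧ q.2 ≤ a - 2)
            = ∅ := by
          rw [Finset.eq_empty_iff_forall_notMem]
          rintro ⟨u, v⟩ hq
          simp only [Finset.mem_filter, rgf_mem_solF ha1] at hq
          obtain ⟨heq, hu, hv⟩ := hq
          rcases rgf_box_char ha heven heq hu hv with ⟨hn, -⟩ | ⟨⟨hn, hn'⟩, -⟩ | ⟨⟨hn, hn'⟩, -⟩ <;>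
            [exact h0 hn; exact h1 (by omega); exact h2 (by omega)]
        rw [hset, Finset.card_empty]
        simp only [rgfChi]
        split_ifs <;> omega

lemma rgf_L6 {a : ℕ} (ha : 4 ≤ a) (heven : Even a) (n : ℤ) :
    (rgfSolF a (((a:ℤ)-1)*n)).card + (rgfSolF a (((a:ℤ)-1)*(n - (2*(a:ℤ)+1)))).card
      = (rgfSolF a (((a:ℤ)-1)*(n - (a:ℤ)))).card
        + (rgfSolF a (((a:ℤ)-1)*(n - ((a:ℤ)+1)))).card + rgfChi a n := by
  have ha1 : 1 ≤ a := by omega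
  have hcast : ((a - 1 : ℕ) : ℤ) = (a:ℤ) - 1 := by omega
  -- the "A" decomposition at a general point p
  have hA : ∀ p : ℤ,
      (rgfSolF a (((a:ℤ)-1)*p)).card
        = (rgfSolF a (((a:ℤ)-1)*(p - (a:ℤ)))).card
          + ((rgfSolF a (((a:ℤ)-1)*p)).filter fun q => q.1 ≤ a - 2).card := by
    intro p
    have hpart := Finset.card_filter_add_card_filter_not
      (s := rgfSolF a (((a:ℤ)-1)*p)) (p := fun q : ℕ × ℕ => a - 1 ≤ q.1)
    have hsh := rgf_shift_u ha1 (a - 1) (((a:ℤ)-1)*p)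
    rw [hcast] at hsh
    have harg : ((a:ℤ)-1)*p - ((a:ℤ)-1) * a = ((a:ℤ)-1)*(p - (a:ℤ)) := by ring
    rw [harg] at hsh
    have hneg : ((rgfSolF a (((a:ℤ)-1)*p)).filter fun q => ¬ (a - 1 ≤ q.1))
        = (rgfSolF a (((a:ℤ)-1)*p)).filter fun q => q.1 ≤ a - 2 := by
      apply Finset.filter_congr
      intro q _
      simp only [not_le, eq_iff_iff]
      omega
    rw [hneg, hsh] at hpart
    omega
  -- split the bounded-u part by v
  have hsplit : ((rgfSolF a (((a:ℤ)-1)*n)).filter fun q => q.1 ≤ a - 2).card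
      = rgfChi a n
        + ((rgfSolF a (((a:ℤ)-1)*(n - ((a:ℤ)+1)))).filter fun q => q.1 ≤ a - 2).card := by
    have hpart := Finset.card_filter_add_card_filter_not
      (s := (rgfSolF a (((a:ℤ)-1)*n)).filter fun q => q.1 ≤ a - 2)
      (p := fun q : ℕ × ℕ => q.2 ≤ a - 2)
    rw [Finset.filter_filter, Finset.filter_filter] at hpart
    have hkc := rgf_key_count ha heven n
    have hsh := rgf_shift_v_bdd ha1 (a - 1) (a - 2) (((a:ℤ)-1)*n)
    rw [hcast] at hsh
    have harg : ((a:ℤ)-1)*n - ((a:ℤ)-1) * ((a:ℤ)+1) = ((a:ℤ)-1)*(n - ((a:ℤ)+1)) := by ring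
    rw [harg] at hsh
    have hneg : ((rgfSolF a (((a:ℤ)-1)*n)).filter fun q => q.1 ≤ a - 2 ∧ ¬ (q.2 ≤ a - 2))
        = (rgfSolF a (((a:ℤ)-1)*n)).filter fun q => q.1 ≤ a - 2 ∧ a - 1 ≤ q.2 := by
      apply Finset.filter_congr
      intro q _
      simp only [not_le, eq_iff_iff]
      omega
    rw [hneg, hsh] at hpart
    rw [← hkc]
    omega
  have h1 := hA n
  have h2 := hA (n - ((a:ℤ)+1))
  have harg2 : n - ((a:ℤ)+1) - (a:ℤ) = n - (2*(a:ℤ)+1) := by ring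
  rw [harg2] at h2
  omega

lemma rgf_ind_sum (c : ℤ) (k : ℕ) (n : ℤ) :
    (∑ j ∈ Finset.range k, if n - c - (j:ℤ) = 0 then (1:ℕ) else 0)
      = if c ≤ n ∧ n < c + k then 1 else 0 := by
  induction k with
  | zero =>
    simp only [Finset.range_zero, Finset.sum_empty, Nat.cast_zero]
    split_ifs with h
    · omega
    · rfl
  | succ k ih =>
    rw [Finset.sum_range_succ, ih]
    split_ifs <;> push_cast at * <;> omega

/-- the right-hand side as a function on ℤ -/
def rgfR (a : ℕ) (x : ℤ) : ℕ :=
  (rgfSolF a x).card + ∑ j ∈ Finset.range (a/2 - 1),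
    ((rgfSolF a (x - (((a+2)/2 : ℕ) : ℤ) - j)).card
      + (rgfSolF a (x - ((a:ℤ)+2) - j)).card)

lemma rgf_R_rec {a : ℕ} (ha : 4 ≤ a) (x : ℤ) :
    rgfR a x + rgfR a (x - (2*(a:ℤ)+1))
      = rgfR a (x - (a:ℤ)) + rgfR a (x - ((a:ℤ)+1)) + rgfChi a x := by
  have ha1 : 1 ≤ a := by omega
  have hterm : ∀ j ∈ Finset.range (a/2 - 1),
      ((rgfSolF a (x - (((a+2)/2 : ℕ) : ℤ) - (j:ℤ))).card
          + (rgfSolF a (x - ((a:ℤ)+2) - (j:ℤ))).card)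
        + ((rgfSolF a (x - (2*(a:ℤ)+1) - (((a+2)/2 : ℕ) : ℤ) - (j:ℤ))).card
          + (rgfSolF a (x - (2*(a:ℤ)+1) - ((a:ℤ)+2) - (j:ℤ))).card)
      = (((rgfSolF a (x - (a:ℤ) - (((a+2)/2 : ℕ) : ℤ) - (j:ℤ))).card
          + (rgfSolF a (x - (a:ℤ) - ((a:ℤ)+2) - (j:ℤ))).card)
        + ((rgfSolF a (x - ((a:ℤ)+1) - (((a+2)/2 : ℕ) : ℤ) - (j:ℤ))).card
          + (rgfSolF a (x - ((a:ℤ)+1) - ((a:ℤ)+2) - (j:ℤ))).card))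
        + ((if x - (((a+2)/2 : ℕ) : ℤ) - (j:ℤ) = 0 then 1 else 0)
          + (if x - ((a:ℤ)+2) - (j:ℤ) = 0 then 1 else 0)) := by
    intro j _
    have k1 := rgf_key4 ha1 (x - (((a+2)/2 : ℕ) : ℤ) - (j:ℤ))
    have k2 := rgf_key4 ha1 (x - ((a:ℤ)+2) - (j:ℤ))
    have r1 : x - (2*(a:ℤ)+1) - (((a+2)/2 : ℕ) : ℤ) - (j:ℤ)
        = x - (((a+2)/2 : ℕ) : ℤ) - (j:ℤ) - (2*(a:ℤ)+1) := by ring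
    have r2 : x - (2*(a:ℤ)+1) - ((a:ℤ)+2) - (j:ℤ)
        = x - ((a:ℤ)+2) - (j:ℤ) - (2*(a:ℤ)+1) := by ring
    have r3 : x - (a:ℤ) - (((a+2)/2 : ℕ) : ℤ) - (j:ℤ)
        = x - (((a+2)/2 : ℕ) : ℤ) - (j:ℤ) - (a:ℤ) := by ring
    have r4 : x - (a:ℤ) - ((a:ℤ)+2) - (j:ℤ) = x - ((a:ℤ)+2) - (j:ℤ) - (a:ℤ) := by ring
    have r5 : x - ((a:ℤ)+1) - (((a+2)/2 : ℕ) : ℤ) - (j:ℤ)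
        = x - (((a+2)/2 : ℕ) : ℤ) - (j:ℤ) - ((a:ℤ)+1) := by ring
    have r6 : x - ((a:ℤ)+1) - ((a:ℤ)+2) - (j:ℤ) = x - ((a:ℤ)+2) - (j:ℤ) - ((a:ℤ)+1) := by ring
    rw [r1, r2, r3, r4, r5, r6]
    omega
  have hsum := Finset.sum_congr rfl hterm
  simp only [Finset.sum_add_distrib] at hsum
  have hchi : rgfChi a x = (if x = 0 then 1 else 0)
      + ((∑ j ∈ Finset.range (a/2 - 1),
            if x - (((a+2)/2 : ℕ) : ℤ) - (j:ℤ) = 0 then (1:ℕ) else 0)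
        + (∑ j ∈ Finset.range (a/2 - 1),
            if x - ((a:ℤ)+2) - (j:ℤ) = 0 then (1:ℕ) else 0)) := by
    rw [rgf_ind_sum (((a+2)/2 : ℕ) : ℤ) (a/2 - 1) x, rgf_ind_sum ((a:ℤ)+2) (a/2 - 1) x]
    simp only [rgfChi]
    omega
  have hmain := rgf_key4 ha1 x
  simp only [rgfR, Finset.sum_add_distrib]
  omega

lemma rgf_main {a : ℕ} (ha : 4 ≤ a) (heven : Even a) :
    ∀ N : ℕ, ∀ x : ℤ, x < N → (rgfSolF a (((a:ℤ)-1)*x)).card = rgfR a x := by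
  have ha1 : 1 ≤ a := by omega
  have ha4Z : (4:ℤ) ≤ (a:ℤ) := by exact_mod_cast ha
  intro N
  induction N with
  | zero =>
    intro x hx
    have hx0 : x < 0 := by omega
    have hL : ((a:ℤ)-1)*x < 0 := mul_neg_of_pos_of_neg (by omega) hx0
    rw [rgf_D_neg ha1 hL]
    unfold rgfR
    have hz : ∀ j ∈ Finset.range (a/2 - 1),
        ((rgfSolF a (x - (((a+2)/2 : ℕ) : ℤ) - j)).card
          + (rgfSolF a (x - ((a:ℤ)+2) - j)).card) = 0 := by
      intro j _
      have hc1 : (0:ℤ) ≤ (((a+2)/2 : ℕ) : ℤ) := by positivity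
      have hj : (0:ℤ) ≤ (j:ℤ) := by positivity
      rw [rgf_D_neg ha1 (by omega), rgf_D_neg ha1 (by omega)]
    rw [rgf_D_neg ha1 hx0, Finset.sum_eq_zero hz]
    rfl
  | succ N ih =>
    intro x hx
    by_cases hxN : x < N
    · exact ih x hxN
    · have hxeq : x = N := by omega
      have i1 := ih (x - (a:ℤ)) (by omega)
      have i2 := ih (x - ((a:ℤ)+1)) (by omega)
      have i3 := ih (x - (2*(a:ℤ)+1)) (by omega)
      have h6 := rgf_L6 ha heven x
      have hr := rgf_R_rec ha x
      rw [i1, i2, i3] at h6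
      omega

/-- The RGF identity for `⟨a, a+1⟩/(a-1)` with `a ≥ 4` even:
`d((a−1)n) = d(n) + ∑_{j=0}^{a/2−2} (d(n − (a+2)/2 − j) + d(n − (a+2) − j))`,
where `d` is the denumerant for `(a, a+1)`. -/
theorem rgf_identity_a_a1_even
    (a : ℕ) (ha : 4 ≤ a) (heven : Even a)
    (d : ℤ → ℕ)
    (hd : ∀ m : ℤ, d m =
      Set.ncard {q : ℕ × ℕ | (q.1 : ℤ) * a + (q.2 : ℤ) * (a + 1) = m}) :
    ∀ n : ℕ, d ((a - 1 : ℕ) * n) =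
      d n + ∑ j ∈ Finset.range (a / 2 - 1),
        (d ((n : ℤ) - (((a + 2) / 2 : ℕ)) - j) + d ((n : ℤ) - (a + 2) - j)) := by
  intro n
  have ha1 : 1 ≤ a := by omega
  have hd' : ∀ m : ℤ, d m = (rgfSolF a m).card := by
    intro m
    rw [hd m]
    exact rgf_ncard ha1 m
  have H := rgf_main ha heven (n+1) n (by push_cast; omega)
  have hcastarg : ((a - 1 : ℕ) : ℤ) = (a:ℤ) - 1 := by omega
  simp only [hd', hcastarg, H, rgfR]
end

section
/- Let a ≥ 3 be an integer and let S = {m ∈ ℕ : (a−1)·m ∈ ⟨a, a+1⟩} be the quotient of ⟨a, a+1⟩ by a−1. Then the Frobenius number of S, i.e. the greatest natural number not belonging to S, equals (a−1)/2 if a is odd and a/2 if a is even. -/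
private lemma quot_mem_aux (a m : ℕ) (ha : 3 ≤ a) (hm : a + 1 ≤ 2 * m) :
    ∃ x y : ℕ, x * a + y * (a + 1) = (a - 1) * m := by
  have ha0 : 0 < a := by omega
  obtain ⟨q, r, hr, hqr⟩ : ∃ q r, r < a ∧ m = q * a + r :=
    ⟨m / a, m % a, Nat.mod_lt _ ha0, (Nat.div_add_mod' m a).symm⟩
  rcases Nat.eq_zero_or_pos r with hr0 | hr0
  · -- m = q * a
    refine ⟨(a - 1) * q, 0, ?_⟩
    subst hqr; rw [hr0]
    zify [show 1 ≤ a by omega]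
    ring
  · -- r ≥ 1
    refine ⟨2 * m - (q + 1) * (a + 1), (q + 1) * a - m, ?_⟩
    have h1 : (q + 1) * (a + 1) ≤ 2 * m := by
      rcases Nat.eq_zero_or_pos q with hq0 | hq0
      · subst hqr; subst hq0; simp only [Nat.zero_mul, Nat.zero_add] at *; omega
      · subst hqr; nlinarith
    have h2 : m ≤ (q + 1) * a := by subst hqr; nlinarith
    zify [h1, h2, show 1 ≤ a by omega]
    ring

private lemma quot_notmem_aux (a n : ℕ) (ha : 0 < a) (h : n / a < n % a) :
    ∀ x y : ℕ, x * a + y * (a + 1) ≠ n := by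
  rintro x y rfl
  have he : x * a + y * (a + 1) = a * (x + y) + y := by ring
  rw [he, Nat.mul_add_mod, Nat.mul_add_div ha] at h
  exact absurd h (Nat.not_lt.mpr
    (le_trans (Nat.mod_le y a)
      (le_trans (Nat.le_add_left y x) (Nat.le_add_right (x + y) (y / a)))))

/-- The Frobenius number of `⟨a, a+1⟩/(a−1)` (for `a ≥ 3`) is `(a−1)/2` if `a` is
odd and `a/2` if `a` is even: it is the greatest natural number not in the quotient. -/
theorem frobenius_quotient_a_a1_by_am1
    (a : ℕ) (ha : 3 ≤ a) :
    IsGreatest {m : ℕ | (a - 1) * m ∉ AddSubmonoid.closure ({a, a + 1} : Set ℕ)}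
      (if Odd a then (a - 1) / 2 else a / 2) := by
  have ha0 : 0 < a := by omega
  have hOdd : Odd a ↔ a % 2 = 1 := Nat.odd_iff
  constructor
  · -- F is not in the quotient
    show (a - 1) * (if Odd a then (a - 1) / 2 else a / 2) ∉ _
    intro hmem
    rw [AddSubmonoid.mem_closure_pair] at hmem
    obtain ⟨x, y, hxy⟩ := hmem
    simp only [smul_eq_mul] at hxy
    by_cases hpar : Odd a
    · rw [if_pos hpar] at hxy
      have hp := Nat.odd_iff.mp hpar
      obtain ⟨c, hc⟩ : ∃ c, a = 2 * c + 3 := ⟨(a - 3) / 2, by omega⟩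
      have hn : (a - 1) * ((a - 1) / 2) = a * c + (c + 2) := by
        have h1 : a - 1 = 2 * (c + 1) := by omega
        have h2 : (a - 1) / 2 = c + 1 := by omega
        rw [h2, h1, hc]; ring
      rw [hn] at hxy
      refine quot_notmem_aux a (a * c + (c + 2)) ha0 ?_ x y hxy
      rw [Nat.mul_add_div ha0, Nat.mul_add_mod,
        Nat.div_eq_of_lt (by omega), Nat.mod_eq_of_lt (by omega)]
      omega
    · rw [if_neg hpar] at hxy
      obtain ⟨c, hc⟩ : ∃ c, a = 2 * c + 4 := ⟨(a - 4) / 2, by have := Nat.odd_iff.not.mp hpar; omega⟩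
      have hn : (a - 1) * (a / 2) = a * (c + 1) + (c + 2) := by
        have h1 : a - 1 = 2 * c + 3 := by omega
        have h2 : a / 2 = c + 2 := by omega
        rw [h2, h1, hc]; ring
      rw [hn] at hxy
      refine quot_notmem_aux a (a * (c + 1) + (c + 2)) ha0 ?_ x y hxy
      rw [Nat.mul_add_div ha0, Nat.mul_add_mod,
        Nat.div_eq_of_lt (by omega), Nat.mod_eq_of_lt (by omega)]
      omega
  · -- upper bound
    intro m hm
    by_contra hlt
    push_neg at hlt
    have h2m : a + 1 ≤ 2 * m := by
      by_cases hpar : Odd a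
      · rw [if_pos hpar] at hlt
        have hp := Nat.odd_iff.mp hpar
        omega
      · rw [if_neg hpar] at hlt
        rw [hOdd] at hpar; omega
    obtain ⟨x, y, hxy⟩ := quot_mem_aux a m ha h2m
    exact hm (by
      rw [AddSubmonoid.mem_closure_pair]
      exact ⟨x, y, by simpa [smul_eq_mul] using hxy⟩)
end

section
/- Let p be a positive integer and let A = (a_1, ..., a_n) be positive integers with gcd(a_1, ..., a_n) = 1, and suppose p divides a_i for 1 ≤ i ≤ e and p does not divide a_j for e+1 ≤ j ≤ n (where 0 ≤ e < n). Then the quotient ⟨a_1, ..., a_n⟩/p equals the additive submonoid of ℕ generated by the set {a_1/p, a_2/p, ..., a_e/p} ∪ {m ∈ ℕ : p·m ∈ ⟨a_{e+1}, ..., a_n⟩}. -/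
/-!
The quotient `M/p` of a submonoid `M ≤ ℕ` is `M.comap (AddMonoidHom.mulLeft p)`. Because `p` divides
the generators `aᵢ` with `i < e`, the submonoid they generate is the image under `(p * ·)` of the one
generated by the `aᵢ / p`. If `p * m = p * s + t` with `t` in the submonoid generated by the remaining
generators, then `t = p * (m - s)`, so dividing by `p` distributes over this sum.
-/

namespace AddSubmonoid

theorem closure_eq_map_mulLeft_closure_image_div {p : ℕ} {S : Set ℕ} (hS : ∀ x ∈ S, p ∣ x) :
    closure S = (closure ((· / p) '' S)).map (AddMonoidHom.mulLeft p) := by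
  rw [AddMonoidHom.map_mclosure, Set.image_image]
  congr 1
  exact (Set.image_congr fun x hx => Nat.mul_div_cancel' (hS x hx)).trans (Set.image_id' S) |>.symm

theorem comap_mulLeft_map_mulLeft_sup (p : ℕ) (A B : AddSubmonoid ℕ) :
    (A.map (AddMonoidHom.mulLeft p) ⊔ B).comap (AddMonoidHom.mulLeft p) =
      A ⊔ B.comap (AddMonoidHom.mulLeft p) := by
  rcases Nat.eq_zero_or_pos p with rfl | hp
  · have comap_zero (C : AddSubmonoid ℕ) : C.comap (AddMonoidHom.mulLeft 0) = ⊤ :=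
      eq_top_iff.2 fun m _ => by simp [C.zero_mem]
    simp [comap_zero]
  refine le_antisymm (fun m hm => ?_) (sup_le ?_ (monotone_comap le_sup_right))
  · obtain ⟨_, ⟨s, hs, rfl⟩, t, ht, hst⟩ := mem_sup.1 (mem_comap.1 hm)
    simp only [AddMonoidHom.coe_mulLeft] at hst
    have hsm : s ≤ m := le_of_mul_le_mul_left (Nat.le.intro hst) hp
    have ht' : p * (m - s) = t := by rw [Nat.mul_sub, ← hst, Nat.add_sub_cancel_left]
    rw [← Nat.add_sub_cancel' hsm]
    exact add_mem (mem_sup_left hs) (mem_sup_right (by simpa [ht'] using ht))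
  · exact (le_comap_map A).trans (monotone_comap le_sup_left)

end AddSubmonoid

theorem quotient_split_by_divisibility_general
    (p n e : ℕ) (a : Fin n → ℕ)
    (hdvd : ∀ i : Fin n, (i : ℕ) < e → p ∣ a i) :
    {m : ℕ | p * m ∈ AddSubmonoid.closure (Set.range a)} =
      ↑(AddSubmonoid.closure
        ({x : ℕ | ∃ i : Fin n, (i : ℕ) < e ∧ x = a i / p} ∪
         {m : ℕ | p * m ∈
            AddSubmonoid.closure {x : ℕ | ∃ j : Fin n, e ≤ (j : ℕ) ∧ x = a j}})) := by
  set H : Set ℕ := {x | ∃ i : Fin n, (i : ℕ) < e ∧ x = a i}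
  set T : Set ℕ := {x | ∃ j : Fin n, e ≤ (j : ℕ) ∧ x = a j}
  have range_eq : Set.range a = H ∪ T := by
    ext x
    constructor
    · rintro ⟨i, rfl⟩
      exact (lt_or_ge (i : ℕ) e).imp (⟨i, ·, rfl⟩) (⟨i, ·, rfl⟩)
    · rintro (⟨i, -, rfl⟩ | ⟨i, -, rfl⟩) <;> exact ⟨i, rfl⟩
  have image_eq : (· / p) '' H = {x | ∃ i : Fin n, (i : ℕ) < e ∧ x = a i / p} := by
    ext x
    simp only [H, Set.mem_image, Set.mem_ofPred_eq]
    constructor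
    · rintro ⟨_, ⟨i, hi, rfl⟩, rfl⟩
      exact ⟨i, hi, rfl⟩
    · rintro ⟨i, hi, rfl⟩
      exact ⟨_, ⟨i, hi, rfl⟩, rfl⟩
  have hH : ∀ x ∈ H, p ∣ x := by
    rintro _ ⟨i, hi, rfl⟩
    exact hdvd i hi
  have closure_quot_T : AddSubmonoid.closure {m | p * m ∈ AddSubmonoid.closure T} =
      (AddSubmonoid.closure T).comap (AddMonoidHom.mulLeft p) :=
    AddSubmonoid.closure_eq ((AddSubmonoid.closure T).comap (AddMonoidHom.mulLeft p))
  rw [AddSubmonoid.closure_union, closure_quot_T, ← image_eq,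
    ← AddSubmonoid.comap_mulLeft_map_mulLeft_sup,
    ← AddSubmonoid.closure_eq_map_mulLeft_closure_image_div hH, ← AddSubmonoid.closure_union,
    ← range_eq]
  rfl

/-- Equation (10): if `p ∣ aᵢ` for `i < e` and `p ∤ aⱼ` for `j ≥ e`, then
`⟨a₁,...,aₙ⟩/p = ⟨a₁/p, ..., a_e/p, ⟨a_{e+1},...,aₙ⟩/p⟩`. -/
theorem quotient_split_by_divisibility
    (p n e : ℕ) (hp : 0 < p) (he : e < n) (a : Fin n → ℕ)
    (ha : ∀ i, 0 < a i) (hgcd : Finset.univ.gcd a = 1)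
    (hdvd : ∀ i : Fin n, (i : ℕ) < e → p ∣ a i)
    (hndvd : ∀ j : Fin n, e ≤ (j : ℕ) → ¬ p ∣ a j) :
    {m : ℕ | p * m ∈ AddSubmonoid.closure (Set.range a)} =
      ↑(AddSubmonoid.closure
        ({x : ℕ | ∃ i : Fin n, (i : ℕ) < e ∧ x = a i / p} ∪
         {m : ℕ | p * m ∈
            AddSubmonoid.closure {x : ℕ | ∃ j : Fin n, e ≤ (j : ℕ) ∧ x = a j}})) :=
  quotient_split_by_divisibility_general p n e a hdvd
end

section
/- Let a_1, a_2 be positive integers with gcd(a_1, a_2) = 1, where a_1 is even and a_2 is odd. Then the quotient ⟨a_1, a_2⟩/2 equals the numerical semigroup generated by a_1/2 and a_2. -/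
/-- Corollary 3.3 (first part): for coprime `a₁` even and `a₂` odd,
`⟨a₁, a₂⟩/2 = ⟨a₁/2, a₂⟩`. -/
theorem quotient_two_even_odd
    (a₁ a₂ : ℕ) (h₁ : 0 < a₁) (h₂ : 0 < a₂)
    (heven : Even a₁) (hodd : Odd a₂) (hgcd : Nat.gcd a₁ a₂ = 1) :
    {m : ℕ | 2 * m ∈ AddSubmonoid.closure ({a₁, a₂} : Set ℕ)} =
      ↑(AddSubmonoid.closure ({a₁ / 2, a₂} : Set ℕ)) := by
  obtain ⟨c, hc⟩ := heven
  have hc2 : a₁ = 2 * c := by omega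
  subst hc2
  have hdiv : 2 * c / 2 = c := by omega
  ext m
  simp only [Set.mem_setOf_eq, SetLike.mem_coe, AddSubmonoid.mem_closure_pair, smul_eq_mul, hdiv]
  constructor
  · rintro ⟨x, y, hxy⟩
    have hy : Even y := by
      rcases Nat.even_or_odd y with h | h
      · exact h
      · exfalso
        have ho : Odd (y * a₂) := h.mul hodd
        have key : 2 * (x * c) + y * a₂ = 2 * m := by rw [← hxy]; ring
        have he : Even (y * a₂) := ⟨m - x * c, by omega⟩
        rw [Nat.even_iff] at he
        rw [Nat.odd_iff] at ho
        omega
    obtain ⟨y', hy'⟩ := hy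
    exact ⟨x, y', by nlinarith⟩
  · rintro ⟨x, y, hxy⟩
    exact ⟨x, 2 * y, by nlinarith⟩
end

section
/- Let a_1, a_2 be odd positive integers with gcd(a_1, a_2) = 1. Then the quotient ⟨a_1, a_2⟩/2 equals the numerical semigroup generated by a_1, a_2, and (a_1 + a_2)/2. -/
/-!
Write `c = (a₁ + a₂) / 2`, so that `2c = a₁ + a₂`. Doubling the generators `a₁, a₂, c` lands in
`⟨a₁, a₂⟩`, which gives one inclusion. Conversely, if `2m = x a₁ + y a₂` with `a₁, a₂` odd, then
`x` and `y` have the same parity `r`, and `m = ⌊x/2⌋ a₁ + ⌊y/2⌋ a₂ + r c`.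
-/

lemma Nat.mod_two_eq_of_even_mul_add_mul {a b x y : ℕ} (ha : Odd a) (hb : Odd b)
    (h : Even (x * a + y * b)) : x % 2 = y % 2 := by
  rw [Nat.even_iff, Nat.add_mod, Nat.mul_mod, Nat.mul_mod y, Nat.odd_iff.mp ha,
    Nat.odd_iff.mp hb] at h
  omega

namespace AddSubmonoid

lemma closure_odd_odd_half_le_comap_two_mul {a b : ℕ} (ha : Odd a) (hb : Odd b) :
    closure ({a, b, (a + b) / 2} : Set ℕ) ≤
      (closure ({a, b} : Set ℕ)).comap (AddMonoidHom.mulLeft 2) := by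
  have ha_mem : a ∈ closure ({a, b} : Set ℕ) := subset_closure (by simp)
  have hb_mem : b ∈ closure ({a, b} : Set ℕ) := subset_closure (by simp)
  rw [closure_le]
  rintro z (rfl | rfl | rfl) <;> simp only [SetLike.mem_coe, mem_comap, AddMonoidHom.coe_mulLeft]
  · rw [two_mul]; exact add_mem ha_mem ha_mem
  · rw [two_mul]; exact add_mem hb_mem hb_mem
  · rw [Nat.two_mul_div_two_of_even (ha.add_odd hb)]; exact add_mem ha_mem hb_mem

lemma mem_closure_odd_odd_half_of_two_mul_mem {a b m : ℕ} (ha : Odd a) (hb : Odd b)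
    (hm : 2 * m ∈ closure ({a, b} : Set ℕ)) : m ∈ closure ({a, b, (a + b) / 2} : Set ℕ) := by
  obtain ⟨x, y, hxy⟩ := (mem_closure_pair a b (2 * m)).mp hm
  simp only [smul_eq_mul] at hxy
  have hr : x % 2 = y % 2 :=
    Nat.mod_two_eq_of_even_mul_add_mul ha hb ⟨m, by rw [hxy, two_mul]⟩
  have hm_eq : m = (x / 2) * a + (y / 2) * b + (x % 2) * ((a + b) / 2) := by
    have hc := Nat.two_mul_div_two_of_even (ha.add_odd hb)
    have hx := Nat.div_add_mod x 2
    have hy := Nat.div_add_mod y 2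
    rw [← hr] at hy
    rw [← hx, ← hy] at hxy
    apply Nat.eq_of_mul_eq_mul_left two_pos
    rw [← hxy]
    linear_combination (x % 2) * hc.symm
  rw [hm_eq]
  exact add_mem (add_mem (nsmul_mem (subset_closure (by simp)) _)
    (nsmul_mem (subset_closure (by simp)) _)) (nsmul_mem (subset_closure (by simp)) _)

end AddSubmonoid

theorem quotient_two_odd_odd_general
    (a₁ a₂ : ℕ)
    (hodd₁ : Odd a₁) (hodd₂ : Odd a₂) :
    {m : ℕ | 2 * m ∈ AddSubmonoid.closure ({a₁, a₂} : Set ℕ)} =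
      ↑(AddSubmonoid.closure ({a₁, a₂, (a₁ + a₂) / 2} : Set ℕ)) :=
  Set.Subset.antisymm (fun _ => AddSubmonoid.mem_closure_odd_odd_half_of_two_mul_mem hodd₁ hodd₂)
    (fun _ hm => AddSubmonoid.closure_odd_odd_half_le_comap_two_mul hodd₁ hodd₂ hm)

/-- Corollary 3.3 (second part): for coprime odd `a₁, a₂`,
`⟨a₁, a₂⟩/2 = ⟨a₁, a₂, (a₁+a₂)/2⟩`. -/
theorem quotient_two_odd_odd
    (a₁ a₂ : ℕ) (h₁ : 0 < a₁) (h₂ : 0 < a₂)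
    (hodd₁ : Odd a₁) (hodd₂ : Odd a₂) (hgcd : Nat.gcd a₁ a₂ = 1) :
    {m : ℕ | 2 * m ∈ AddSubmonoid.closure ({a₁, a₂} : Set ℕ)} =
      ↑(AddSubmonoid.closure ({a₁, a₂, (a₁ + a₂) / 2} : Set ℕ)) :=
  quotient_two_odd_odd_general a₁ a₂ hodd₁ hodd₂
end

section
/- Let a_1, a_2 be positive integers with gcd(a_1, a_2) = 1 such that either a_1 ≡ a_2 ≡ 1 (mod 3) or a_1 ≡ a_2 ≡ 2 (mod 3). Then the quotient ⟨a_1, a_2⟩/3 equals the numerical semigroup generated by a_1, a_2, (2a_1 + a_2)/3, and (a_1 + 2a_2)/3. -/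
/-!
If `a₁ ≡ a₂ ≢ 0 (mod 3)`, then `x a₁ + y a₂ ≡ (x + y) a₁`, so `3 ∣ x a₁ + y a₂` forces
`x + y ≡ 0 (mod 3)`. Hence `(x, y)` is `3 (x', y')` plus one of `(0, 0)`, `(1, 2)`, `(2, 1)`, and
`(x a₁ + y a₂) / 3` is `x' a₁ + y' a₂` plus `0`, `(a₁ + 2a₂)/3` or `(2a₁ + a₂)/3` respectively.
-/

theorem Nat.Prime.dvd_add_of_dvd_mul_add_mul {p a b x y : ℕ} (hp : p.Prime)
    (hab : a ≡ b [MOD p]) (ha : ¬ p ∣ a) (h : p ∣ x * a + y * b) : p ∣ x + y := by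
  have hmul : x * a + y * b ≡ (x + y) * a [MOD p] := by
    rw [add_mul]
    exact Nat.ModEq.add_left _ (Nat.ModEq.mul_left _ hab.symm)
  have hdvd : p ∣ (x + y) * a := (hmul.dvd_iff dvd_rfl).mp h
  exact (hp.dvd_mul.mp hdvd).resolve_right ha

theorem Nat.exists_three_mul_add_of_three_dvd_add {x y : ℕ} (h : 3 ∣ x + y) :
    ∃ x' y', (x = 3 * x' ∧ y = 3 * y') ∨ (x = 3 * x' + 1 ∧ y = 3 * y' + 2) ∨
      (x = 3 * x' + 2 ∧ y = 3 * y' + 1) :=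
  ⟨x / 3, y / 3, by omega⟩

namespace AddSubmonoid

theorem comap_mulLeft_three_closure_pair {a₁ a₂ : ℕ} (hres : a₁ ≡ a₂ [MOD 3])
    (hndvd : ¬ 3 ∣ a₁) :
    (closure ({a₁, a₂} : Set ℕ)).comap (AddMonoidHom.mulLeft 3) =
      closure ({a₁, a₂, (2 * a₁ + a₂) / 3, (a₁ + 2 * a₂) / 3} : Set ℕ) := by
  have hres' : a₁ % 3 = a₂ % 3 := hres
  have hc : 3 * ((2 * a₁ + a₂) / 3) = 2 * a₁ + a₂ := by omega
  have hd : 3 * ((a₁ + 2 * a₂) / 3) = a₁ + 2 * a₂ := by omega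
  refine le_antisymm (fun m hm => ?_) (closure_le.mpr ?_)
  · obtain ⟨x, y, hxy⟩ := (mem_closure_pair _ _ _).mp hm
    simp only [smul_eq_mul, AddMonoidHom.coe_mulLeft] at hxy
    have hxy3 : 3 ∣ x + y := Nat.prime_three.dvd_add_of_dvd_mul_add_mul hres hndvd ⟨m, hxy⟩
    have hbase : ∀ x' y', x' * a₁ + y' * a₂ ∈
        closure ({a₁, a₂, (2 * a₁ + a₂) / 3, (a₁ + 2 * a₂) / 3} : Set ℕ) := fun x' y' =>
      add_mem (nsmul_mem (subset_closure (by simp)) x') (nsmul_mem (subset_closure (by simp)) y')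
    obtain ⟨x', y', ⟨rfl, rfl⟩ | ⟨rfl, rfl⟩ | ⟨rfl, rfl⟩⟩ :=
      Nat.exists_three_mul_add_of_three_dvd_add hxy3
    · obtain rfl : m = x' * a₁ + y' * a₂ := by linarith
      exact hbase x' y'
    · obtain rfl : m = x' * a₁ + y' * a₂ + (a₁ + 2 * a₂) / 3 := by linarith
      exact add_mem (hbase x' y') (subset_closure (by simp))
    · obtain rfl : m = x' * a₁ + y' * a₂ + (2 * a₁ + a₂) / 3 := by linarith
      exact add_mem (hbase x' y') (subset_closure (by simp))
  · have hmul : ∀ x y, x * a₁ + y * a₂ ∈ closure ({a₁, a₂} : Set ℕ) := fun x y =>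
      (mem_closure_pair _ _ _).mpr ⟨x, y, rfl⟩
    rintro g (rfl | rfl | rfl | rfl)
    · simpa using hmul 3 0
    · simpa using hmul 0 3
    · simpa [hc] using hmul 2 1
    · simpa [hd] using hmul 1 2

end AddSubmonoid

theorem quotient_three_same_residue_general
    (a₁ a₂ : ℕ)
    (hmod : (a₁ % 3 = 1 ∧ a₂ % 3 = 1) ∨ (a₁ % 3 = 2 ∧ a₂ % 3 = 2)) :
    {m : ℕ | 3 * m ∈ AddSubmonoid.closure ({a₁, a₂} : Set ℕ)} =
      ↑(AddSubmonoid.closure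
        ({a₁, a₂, (2 * a₁ + a₂) / 3, (a₁ + 2 * a₂) / 3} : Set ℕ)) := by
  have hres : a₁ ≡ a₂ [MOD 3] := by unfold Nat.ModEq; omega
  have hndvd : ¬ 3 ∣ a₁ := by omega
  rw [← AddSubmonoid.comap_mulLeft_three_closure_pair hres hndvd]
  rfl

/-- Corollary 3.4 (first part): for coprime `a₁, a₂` with `a₁ ≡ a₂ ≡ 1 (mod 3)` or
`a₁ ≡ a₂ ≡ 2 (mod 3)`, `⟨a₁, a₂⟩/3 = ⟨a₁, a₂, (2a₁+a₂)/3, (a₁+2a₂)/3⟩`. -/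
theorem quotient_three_same_residue
    (a₁ a₂ : ℕ) (h₁ : 0 < a₁) (h₂ : 0 < a₂) (hgcd : Nat.gcd a₁ a₂ = 1)
    (hmod : (a₁ % 3 = 1 ∧ a₂ % 3 = 1) ∨ (a₁ % 3 = 2 ∧ a₂ % 3 = 2)) :
    {m : ℕ | 3 * m ∈ AddSubmonoid.closure ({a₁, a₂} : Set ℕ)} =
      ↑(AddSubmonoid.closure
        ({a₁, a₂, (2 * a₁ + a₂) / 3, (a₁ + 2 * a₂) / 3} : Set ℕ)) :=
  quotient_three_same_residue_general a₁ a₂ hmod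
end

section
/- Let a_1, a_2 be positive integers with gcd(a_1, a_2) = 1 such that a_1 ≡ 1 (mod 3) and a_2 ≡ 2 (mod 3). Then the quotient ⟨a_1, a_2⟩/3 equals the numerical semigroup generated by a_1, a_2, and (a_1 + a_2)/3. -/
/-!
Reducing a representation `3m = x a₁ + y a₂` modulo 3 gives `x ≡ y (mod 3)`, because `a₁ ≡ 1` and
`a₂ ≡ -1`. If, say, `y ≤ x`, write `x = y + 3k`; then `3m = y (a₁ + a₂) + 3k a₁`, so
`m = y (a₁ + a₂)/3 + k a₁`. Conversely three times each of the three generators lies in `⟨a₁, a₂⟩`.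
The argument works verbatim with any modulus `n` in place of 3.
-/

variable {n a₁ a₂ c m x y : ℕ}

theorem Nat.modEq_of_dvd_mul_add_mul (h₁ : a₁ ≡ 1 [MOD n]) (h₁₂ : n ∣ a₁ + a₂)
    (h : n ∣ x * a₁ + y * a₂) : x ≡ y [MOD n] := by
  rw [← ZMod.natCast_eq_natCast_iff] at h₁ ⊢
  rw [← ZMod.natCast_eq_zero_iff] at h₁₂ h
  push_cast at h₁ h₁₂ h
  linear_combination h + ((y : ZMod n) - x) * h₁ - (y : ZMod n) * h₁₂

namespace AddSubmonoid

theorem mem_closure_triple_of_mul_eq (hn : 0 < n) (hc : a₁ + a₂ = n * c)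
    (hm : x * a₁ + y * a₂ = n * m) (hxy : x ≡ y [MOD n]) :
    m ∈ closure ({a₁, a₂, c} : Set ℕ) := by
  wlog hyx : y ≤ x generalizing a₁ a₂ x y
  · rw [Set.insert_comm]
    exact this (by rwa [add_comm]) (by rwa [add_comm]) hxy.symm (by omega)
  obtain ⟨d, rfl⟩ := Nat.exists_eq_add_of_le hyx
  obtain ⟨k, rfl⟩ : n ∣ d := by simpa using (Nat.modEq_iff_dvd' hyx).mp hxy.symm
  have hm' : m = y * c + k * a₁ := by
    refine Nat.eq_of_mul_eq_mul_left hn ?_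
    calc n * m = y * (a₁ + a₂) + n * k * a₁ := by rw [← hm]; ring
      _ = n * (y * c + k * a₁) := by rw [hc]; ring
  rw [hm']
  refine add_mem ?_ ?_ <;> rw [← smul_eq_mul] <;> exact nsmul_mem (subset_closure (by simp)) _

theorem closure_triple_le_comap_mulLeft (hc : a₁ + a₂ = n * c) :
    closure ({a₁, a₂, c} : Set ℕ) ≤ (closure ({a₁, a₂} : Set ℕ)).comap (AddMonoidHom.mulLeft n) := by
  have ha₁ : a₁ ∈ closure ({a₁, a₂} : Set ℕ) := subset_closure (by simp)
  have ha₂ : a₂ ∈ closure ({a₁, a₂} : Set ℕ) := subset_closure (by simp)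
  rw [closure_le]
  rintro z (rfl | rfl | rfl)
  · exact nsmul_mem ha₁ n
  · exact nsmul_mem ha₂ n
  · show n * z ∈ closure ({a₁, a₂} : Set ℕ)
    rw [← hc]
    exact add_mem ha₁ ha₂

/-- `S.comap (AddMonoidHom.mulLeft n)` is the quotient `S/n = {m | n * m ∈ S}`. -/
theorem comap_mulLeft_closure_pair (h₁ : a₁ ≡ 1 [MOD n]) (h₁₂ : n ∣ a₁ + a₂) :
    (closure ({a₁, a₂} : Set ℕ)).comap (AddMonoidHom.mulLeft n) =
      closure ({a₁, a₂, (a₁ + a₂) / n} : Set ℕ) := by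
  have hn : 0 < n := Nat.pos_of_ne_zero (by rintro rfl; simp_all [Nat.ModEq])
  have hc : a₁ + a₂ = n * ((a₁ + a₂) / n) := (Nat.mul_div_cancel' h₁₂).symm
  refine le_antisymm (fun m hm => ?_) (closure_triple_le_comap_mulLeft hc)
  obtain ⟨x, y, hxy⟩ := (mem_closure_pair a₁ a₂ (n * m)).mp hm
  simp only [smul_eq_mul] at hxy
  exact mem_closure_triple_of_mul_eq hn hc hxy
    (Nat.modEq_of_dvd_mul_add_mul h₁ h₁₂ (hxy ▸ dvd_mul_right n m))

end AddSubmonoid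

theorem quotient_three_mixed_residue_general
    (a₁ a₂ : ℕ)
    (hmod₁ : a₁ % 3 = 1) (hmod₂ : a₂ % 3 = 2) :
    {m : ℕ | 3 * m ∈ AddSubmonoid.closure ({a₁, a₂} : Set ℕ)} =
      ↑(AddSubmonoid.closure ({a₁, a₂, (a₁ + a₂) / 3} : Set ℕ)) := by
  rw [← AddSubmonoid.comap_mulLeft_closure_pair hmod₁ (by omega)]
  rfl

/-- Corollary 3.4 (second part): for coprime `a₁ ≡ 1`, `a₂ ≡ 2 (mod 3)`,
`⟨a₁, a₂⟩/3 = ⟨a₁, a₂, (a₁+a₂)/3⟩`. -/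
theorem quotient_three_mixed_residue
    (a₁ a₂ : ℕ) (h₁ : 0 < a₁) (h₂ : 0 < a₂) (hgcd : Nat.gcd a₁ a₂ = 1)
    (hmod₁ : a₁ % 3 = 1) (hmod₂ : a₂ % 3 = 2) :
    {m : ℕ | 3 * m ∈ AddSubmonoid.closure ({a₁, a₂} : Set ℕ)} =
      ↑(AddSubmonoid.closure ({a₁, a₂, (a₁ + a₂) / 3} : Set ℕ)) :=
  quotient_three_mixed_residue_general a₁ a₂ hmod₁ hmod₂
end

section
/- Let a_1, a_2 be odd positive integers with gcd(a_1, a_2) = 1. For an integer m let d(m) be the number of pairs (x, y) ∈ ℕ² with x·a_1 + y·a_2 = m (with d(m) = 0 for m < 0). Then for every n ∈ ℕ, d(2n) = d(n) + d(n − (a_1 + a_2)/2), i.e. the number of (x, y) ∈ ℕ² with a_1·x + a_2·y = 2n equals the number of (x, y) ∈ ℕ² with a_1·x + a_2·y = n plus the number of (x, y) ∈ ℕ² with a_1·x + a_2·y = n − (a_1 + a_2)/2. -/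
private lemma denum_finite (a₁ a₂ : ℕ) (h₁ : 0 < a₁) (h₂ : 0 < a₂) (m : ℤ) :
    {q : ℕ × ℕ | (q.1 : ℤ) * a₁ + (q.2 : ℤ) * a₂ = m}.Finite := by
  apply Set.Finite.subset (Set.finite_Iic (m.toNat, m.toNat))
  rintro ⟨x, y⟩ h
  simp only [Set.mem_setOf_eq] at h
  have ha1 : (1:ℤ) ≤ (a₁:ℤ) := by exact_mod_cast h₁
  have ha2 : (1:ℤ) ≤ (a₂:ℤ) := by exact_mod_cast h₂
  have hx0 : (0:ℤ) ≤ (x:ℤ) := Int.ofNat_nonneg x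
  have hy0 : (0:ℤ) ≤ (y:ℤ) := Int.ofNat_nonneg y
  have hx : (x:ℤ) ≤ m := by nlinarith
  have hy : (y:ℤ) ≤ m := by nlinarith
  have hx' : x ≤ m.toNat := by omega
  have hy' : y ≤ m.toNat := by omega
  simp [Set.mem_Iic, Prod.le_def, hx', hy']

/-- For coprime odd `a₁, a₂`, the denumerant identity
`d(2n; a₁, a₂) = d(n; a₁, a₂) + d(n − (a₁+a₂)/2; a₁, a₂)` holds for all `n ∈ ℕ`. -/
theorem denumerant_double_odd_odd
    (a₁ a₂ : ℕ) (h₁ : 0 < a₁) (h₂ : 0 < a₂)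
    (hodd₁ : Odd a₁) (hodd₂ : Odd a₂) (hgcd : Nat.gcd a₁ a₂ = 1)
    (d : ℤ → ℕ)
    (hd : ∀ m : ℤ, d m =
      Set.ncard {q : ℕ × ℕ | (q.1 : ℤ) * a₁ + (q.2 : ℤ) * a₂ = m}) :
    ∀ n : ℕ, d (2 * n) = d n + d ((n : ℤ) - (((a₁ + a₂) / 2 : ℕ))) := by
  intro n
  obtain ⟨k, hk⟩ := hodd₁
  obtain ⟨l, hl⟩ := hodd₂
  set c : ℕ := (a₁ + a₂) / 2 with hc
  have hca : 2 * c = a₁ + a₂ := by omega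
  rw [hd, hd, hd]
  set S2 := {q : ℕ × ℕ | (q.1 : ℤ) * a₁ + (q.2 : ℤ) * a₂ = 2 * n} with hS2def
  set Sn := {q : ℕ × ℕ | (q.1 : ℤ) * a₁ + (q.2 : ℤ) * a₂ = n} with hSndef
  set Sk := {q : ℕ × ℕ | (q.1 : ℤ) * a₁ + (q.2 : ℤ) * a₂ = (n : ℤ) - c} with hSkdef
  have hfinn : Sn.Finite := denum_finite a₁ a₂ h₁ h₂ n
  have hfink : Sk.Finite := denum_finite a₁ a₂ h₁ h₂ ((n : ℤ) - c)
  have hinj1 : Function.Injective (fun q : ℕ × ℕ => (2 * q.1, 2 * q.2)) := by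
    rintro ⟨x, y⟩ ⟨x', y'⟩ h
    simp only [Prod.mk.injEq] at h
    exact Prod.ext (by omega) (by omega)
  have hinj2 : Function.Injective (fun q : ℕ × ℕ => (2 * q.1 + 1, 2 * q.2 + 1)) := by
    rintro ⟨x, y⟩ ⟨x', y'⟩ h
    simp only [Prod.mk.injEq] at h
    exact Prod.ext (by omega) (by omega)
  have hcast : ((a₁:ℤ) + a₂) = 2 * c := by exact_mod_cast hca.symm
  have hk' : (a₁:ℤ) = 2 * k + 1 := by exact_mod_cast hk
  have hl' : (a₂:ℤ) = 2 * l + 1 := by exact_mod_cast hl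
  have hsplit : S2 = (fun q : ℕ × ℕ => (2 * q.1, 2 * q.2)) '' Sn ∪
      (fun q : ℕ × ℕ => (2 * q.1 + 1, 2 * q.2 + 1)) '' Sk := by
    ext ⟨x, y⟩
    simp only [hS2def, hSndef, hSkdef, Set.mem_union, Set.mem_image, Set.mem_setOf_eq,
      Prod.mk.injEq]
    constructor
    · intro h
      have hxy : Even (x + y) := by
        have h2 : ((x + y : ℕ) : ℤ) = 2 * ((n:ℤ) - x * k - y * l) := by
          rw [hk', hl'] at h
          push_cast
          linarith
        have hev : Even ((x + y : ℕ) : ℤ) := ⟨(n:ℤ) - x * k - y * l, by linarith⟩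
        exact Int.even_coe_nat _ |>.mp hev
      rcases Nat.even_or_odd x with ⟨u, hu⟩ | ⟨u, hu⟩
      · obtain ⟨z, hz⟩ := hxy
        refine Or.inl ⟨(u, z - u), ?_, by omega, by omega⟩
        have hx' : (x:ℤ) = 2 * u := by
          have : x = 2 * u := by omega
          exact_mod_cast this
        have hy' : (y:ℤ) = 2 * (z - u : ℕ) := by
          have : y = 2 * (z - u) := by omega
          exact_mod_cast this
        rw [hx', hy'] at h
        linarith
      · obtain ⟨z, hz⟩ := hxy
        refine Or.inr ⟨(u, z - u - 1), ?_, by omega, by omega⟩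
        have hx' : (x:ℤ) = 2 * u + 1 := by exact_mod_cast hu
        have hy' : (y:ℤ) = 2 * (z - u - 1 : ℕ) + 1 := by
          have : y = 2 * (z - u - 1) + 1 := by omega
          exact_mod_cast this
        rw [hx', hy'] at h
        linarith
    · rintro (⟨⟨u, v⟩, hq, hx, hy⟩ | ⟨⟨u, v⟩, hq, hx, hy⟩)
      · have hx' : (x:ℤ) = 2 * u := by exact_mod_cast hx.symm
        have hy' : (y:ℤ) = 2 * v := by exact_mod_cast hy.symm
        rw [hx', hy']
        linarith
      · have hx' : (x:ℤ) = 2 * u + 1 := by exact_mod_cast hx.symm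
        have hy' : (y:ℤ) = 2 * v + 1 := by exact_mod_cast hy.symm
        rw [hx', hy']
        linarith
  have hdisj : Disjoint ((fun q : ℕ × ℕ => (2 * q.1, 2 * q.2)) '' Sn)
      ((fun q : ℕ × ℕ => (2 * q.1 + 1, 2 * q.2 + 1)) '' Sk) := by
    rw [Set.disjoint_left]
    rintro ⟨x, y⟩ ⟨⟨u, v⟩, _, h1⟩ ⟨⟨u', v'⟩, _, h2⟩
    simp only [Prod.mk.injEq] at h1 h2
    omega
  rw [hsplit, Set.ncard_union_eq hdisj (hfinn.image _) (hfink.image _),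
    Set.ncard_image_of_injective _ hinj1, Set.ncard_image_of_injective _ hinj2]
end

section
/- Let a_1, a_2, a_3 be odd positive integers with gcd(a_1, a_2, a_3) = 1. Then the quotient ⟨a_1, a_2, a_3⟩/2 equals the numerical semigroup generated by a_1, a_2, a_3, (a_1 + a_2)/2, (a_1 + a_3)/2, and (a_2 + a_3)/2. -/
/-!
Write `2m = x a₁ + y a₂ + z a₃` and split each coefficient as `2 ⌊x/2⌋ + (x mod 2)`. The residual
`(x mod 2) a₁ + (y mod 2) a₂ + (z mod 2) a₃` is even, and since the `aᵢ` are odd this forces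
exactly zero or two of the residues to be `1`; so its half is `0` or some `(aᵢ + aⱼ)/2`.
Conversely, twice each proposed generator lies in `⟨a₁, a₂, a₃⟩` because `aᵢ + aⱼ` is even.
-/

namespace AddSubmonoid

lemma exists_eq_of_mem_closure_triple {a b c n : ℕ} (h : n ∈ closure ({a, b, c} : Set ℕ)) :
    ∃ x y z, n = x * a + y * b + z * c := by
  induction h using closure_induction with
  | mem w hw =>
    rcases hw with rfl | rfl | rfl
    exacts [⟨1, 0, 0, by ring⟩, ⟨0, 1, 0, by ring⟩, ⟨0, 0, 1, by ring⟩]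
  | zero => exact ⟨0, 0, 0, by ring⟩
  | add u v _ _ ihu ihv =>
    obtain ⟨x, y, z, rfl⟩ := ihu
    obtain ⟨x', y', z', rfl⟩ := ihv
    exact ⟨x + x', y + y', z + z', by ring⟩

lemma mul_mem_closure_of_mem {s : Set ℕ} {a : ℕ} (h : a ∈ s) (n : ℕ) : n * a ∈ closure s :=
  smul_eq_mul n a ▸ nsmul_mem (subset_closure h) n

lemma two_mul_half_add_mem {S : AddSubmonoid ℕ} {a b : ℕ} (ha : a ∈ S) (hb : b ∈ S)
    (hab : Even (a + b)) : 2 * ((a + b) / 2) ∈ S :=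
  (Nat.two_mul_div_two_of_even hab).symm ▸ add_mem ha hb

variable {a₁ a₂ a₃ : ℕ}

lemma half_residual_mem_closure (ho₁ : Odd a₁) (ho₂ : Odd a₂) (ho₃ : Odd a₃)
    {r₁ r₂ r₃ : ℕ} (hr₁ : r₁ < 2) (hr₂ : r₂ < 2) (hr₃ : r₃ < 2)
    (he : Even (r₁ * a₁ + r₂ * a₂ + r₃ * a₃)) :
    (r₁ * a₁ + r₂ * a₂ + r₃ * a₃) / 2 ∈
      closure ({a₁, a₂, a₃, (a₁ + a₂) / 2, (a₁ + a₃) / 2, (a₂ + a₃) / 2} : Set ℕ) := by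
  rw [Nat.even_iff] at he
  rw [Nat.odd_iff] at ho₁ ho₂ ho₃
  interval_cases r₁ <;> interval_cases r₂ <;> interval_cases r₃ <;>
    simp only [zero_mul, one_mul, zero_add, add_zero] at he ⊢ <;>
    first
    | exact absurd he (by omega)
    | exact zero_mem _
    | exact subset_closure (by simp)

lemma mem_closure_of_two_mul_mem (ho₁ : Odd a₁) (ho₂ : Odd a₂) (ho₃ : Odd a₃) {m : ℕ}
    (hm : 2 * m ∈ closure ({a₁, a₂, a₃} : Set ℕ)) :
    m ∈ closure ({a₁, a₂, a₃, (a₁ + a₂) / 2, (a₁ + a₃) / 2, (a₂ + a₃) / 2} : Set ℕ) := by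
  obtain ⟨x, y, z, hxyz⟩ := exists_eq_of_mem_closure_triple hm
  set e := x % 2 * a₁ + y % 2 * a₂ + z % 2 * a₃ with he_def
  have hsplit : 2 * m = 2 * (x / 2 * a₁ + y / 2 * a₂ + z / 2 * a₃) + e := by
    rw [hxyz, he_def]
    conv_lhs => rw [← Nat.div_add_mod x 2, ← Nat.div_add_mod y 2, ← Nat.div_add_mod z 2]
    ring
  have he : Even e := by rw [Nat.even_iff]; omega
  have hm' : m = x / 2 * a₁ + y / 2 * a₂ + z / 2 * a₃ + e / 2 := by omega
  rw [hm']
  refine add_mem (add_mem (add_mem ?_ ?_) ?_) ?_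
  · exact mul_mem_closure_of_mem (by simp) _
  · exact mul_mem_closure_of_mem (by simp) _
  · exact mul_mem_closure_of_mem (by simp) _
  · exact half_residual_mem_closure ho₁ ho₂ ho₃ (Nat.mod_lt _ two_pos)
      (Nat.mod_lt _ two_pos) (Nat.mod_lt _ two_pos) he

lemma closure_le_comap_two_mul (ho₁ : Odd a₁) (ho₂ : Odd a₂) (ho₃ : Odd a₃) :
    closure ({a₁, a₂, a₃, (a₁ + a₂) / 2, (a₁ + a₃) / 2, (a₂ + a₃) / 2} : Set ℕ) ≤
      (closure ({a₁, a₂, a₃} : Set ℕ)).comap (AddMonoidHom.mulLeft 2) := by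
  have h₁ : a₁ ∈ closure ({a₁, a₂, a₃} : Set ℕ) := subset_closure (by simp)
  have h₂ : a₂ ∈ closure ({a₁, a₂, a₃} : Set ℕ) := subset_closure (by simp)
  have h₃ : a₃ ∈ closure ({a₁, a₂, a₃} : Set ℕ) := subset_closure (by simp)
  simp only [closure_le, Set.insert_subset_iff, Set.singleton_subset_iff, SetLike.mem_coe,
    mem_comap, AddMonoidHom.coe_mulLeft]
  refine ⟨?_, ?_, ?_, ?_, ?_, ?_⟩
  · exact two_mul a₁ ▸ add_mem h₁ h₁
  · exact two_mul a₂ ▸ add_mem h₂ h₂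
  · exact two_mul a₃ ▸ add_mem h₃ h₃
  · exact two_mul_half_add_mem h₁ h₂ (ho₁.add_odd ho₂)
  · exact two_mul_half_add_mem h₁ h₃ (ho₁.add_odd ho₃)
  · exact two_mul_half_add_mem h₂ h₃ (ho₂.add_odd ho₃)

end AddSubmonoid

theorem quotient_two_ooo_general
    (a₁ a₂ a₃ : ℕ)
    (ho₁ : Odd a₁) (ho₂ : Odd a₂) (ho₃ : Odd a₃) :
    {m : ℕ | 2 * m ∈ AddSubmonoid.closure ({a₁, a₂, a₃} : Set ℕ)} =
      ↑(AddSubmonoid.closure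
        ({a₁, a₂, a₃, (a₁ + a₂) / 2, (a₁ + a₃) / 2, (a₂ + a₃) / 2} : Set ℕ)) :=
  Set.Subset.antisymm (fun _ hm => AddSubmonoid.mem_closure_of_two_mul_mem ho₁ ho₂ ho₃ hm)
    (fun _ hm => AddSubmonoid.closure_le_comap_two_mul ho₁ ho₂ ho₃ hm)

/-- Table 1, row (p,t₁,t₂,t₃) = (2,1,1,1): for odd `a₁, a₂, a₃` with gcd 1,
`⟨a₁, a₂, a₃⟩/2 = ⟨a₁, a₂, a₃, (a₁+a₂)/2, (a₁+a₃)/2, (a₂+a₃)/2⟩`. -/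
theorem quotient_two_ooo
    (a₁ a₂ a₃ : ℕ) (h₁ : 0 < a₁) (h₂ : 0 < a₂) (h₃ : 0 < a₃)
    (hgcd : Nat.gcd a₁ (Nat.gcd a₂ a₃) = 1)
    (ho₁ : Odd a₁) (ho₂ : Odd a₂) (ho₃ : Odd a₃) :
    {m : ℕ | 2 * m ∈ AddSubmonoid.closure ({a₁, a₂, a₃} : Set ℕ)} =
      ↑(AddSubmonoid.closure
        ({a₁, a₂, a₃, (a₁ + a₂) / 2, (a₁ + a₃) / 2, (a₂ + a₃) / 2} : Set ℕ)) :=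
  quotient_two_ooo_general a₁ a₂ a₃ ho₁ ho₂ ho₃
end

section
/- Let a_1, a_2, a_3 be positive integers with gcd(a_1, a_2, a_3) = 1 such that a_1 ≡ 0, a_2 ≡ 1, and a_3 ≡ 2 (mod 3). Then the quotient ⟨a_1, a_2, a_3⟩/3 equals the numerical semigroup generated by a_1/3, a_2, a_3, and (a_2 + a_3)/3. -/
/-!
If `3 * m = x * a₁ + y * a₂ + z * a₃`, reducing mod 3 gives `y + 2 * z ≡ 0`, so `y` and `z` have a
common residue `r` mod 3, and then
`m = x * (a₁ / 3) + (y / 3) * a₂ + (z / 3) * a₃ + r * ((a₂ + a₃) / 3)`.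
Conversely, three times each of `a₁ / 3`, `a₂`, `a₃`, `(a₂ + a₃) / 3` lies in `⟨a₁, a₂, a₃⟩`.
-/

namespace Submonoid

@[to_additive]
theorem mem_closure_insert {M : Type*} [CommMonoid M] {a x : M} {s : Set M} :
    x ∈ closure (insert a s) ↔ ∃ n : ℕ, ∃ y ∈ closure s, a ^ n * y = x := by
  rw [← Set.singleton_union, closure_union, mem_sup]
  simp_rw [mem_closure_singleton, exists_exists_eq_and]

end Submonoid

theorem combination_eq_of_eq_three_mul {k₁ k₂ k₃ m x y z : ℕ}
    (h : x * (3 * k₁) + (y * (3 * k₂ + 1) + z * (3 * k₃ + 2)) = 3 * m) :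
    x * k₁ + (y / 3 * (3 * k₂ + 1) + (z / 3 * (3 * k₃ + 2) + y % 3 * (k₂ + k₃ + 1))) = m := by
  have hyz : y % 3 = z % 3 := by
    have : 3 * (x * k₁ + y * k₂ + z * k₃) + (y + 2 * z) = 3 * m := by rw [← h]; ring
    omega
  have hy := Nat.div_add_mod y 3
  have hz := Nat.div_add_mod z 3
  rw [← hyz] at hz
  refine Nat.eq_of_mul_eq_mul_left (by norm_num : 0 < 3) (h ▸ ?_)
  generalize y / 3 = q, z / 3 = q', y % 3 = r at hy hz ⊢
  subst hy hz
  ring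

theorem quotient_three_012_general
    (a₁ a₂ a₃ : ℕ)
    (hm₁ : a₁ % 3 = 0) (hm₂ : a₂ % 3 = 1) (hm₃ : a₃ % 3 = 2) :
    {m : ℕ | 3 * m ∈ AddSubmonoid.closure ({a₁, a₂, a₃} : Set ℕ)} =
      ↑(AddSubmonoid.closure ({a₁ / 3, a₂, a₃, (a₂ + a₃) / 3} : Set ℕ)) := by
  obtain ⟨k₁, rfl⟩ : ∃ k, a₁ = 3 * k := ⟨a₁ / 3, by omega⟩
  obtain ⟨k₂, rfl⟩ : ∃ k, a₂ = 3 * k + 1 := ⟨a₂ / 3, by omega⟩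
  obtain ⟨k₃, rfl⟩ : ∃ k, a₃ = 3 * k + 2 := ⟨a₃ / 3, by omega⟩
  rw [show 3 * k₁ / 3 = k₁ by omega, show (3 * k₂ + 1 + (3 * k₃ + 2)) / 3 = k₂ + k₃ + 1 by omega]
  ext m
  simp only [Set.mem_ofPred_eq, SetLike.mem_coe, AddSubmonoid.mem_closure_insert,
    AddSubmonoid.mem_closure_singleton, smul_eq_mul, exists_exists_eq_and,
    exists_exists_exists_and_eq, ↓existsAndEq, true_and]
  constructor
  · rintro ⟨x, y, z, h⟩
    exact ⟨x, y / 3, z / 3, y % 3, combination_eq_of_eq_three_mul h⟩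
  · rintro ⟨p, q, r, s, rfl⟩
    exact ⟨p, 3 * q + s, 3 * r + s, by ring⟩

/-- Table 1, row (p,t₁,t₂,t₃) = (3,0,1,2): for `a₁ ≡ 0`, `a₂ ≡ 1`, `a₃ ≡ 2 (mod 3)`
with gcd 1, `⟨a₁, a₂, a₃⟩/3 = ⟨a₁/3, a₂, a₃, (a₂+a₃)/3⟩`. -/
theorem quotient_three_012
    (a₁ a₂ a₃ : ℕ) (h₁ : 0 < a₁) (h₂ : 0 < a₂) (h₃ : 0 < a₃)
    (hgcd : Nat.gcd a₁ (Nat.gcd a₂ a₃) = 1)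
    (hm₁ : a₁ % 3 = 0) (hm₂ : a₂ % 3 = 1) (hm₃ : a₃ % 3 = 2) :
    {m : ℕ | 3 * m ∈ AddSubmonoid.closure ({a₁, a₂, a₃} : Set ℕ)} =
      ↑(AddSubmonoid.closure ({a₁ / 3, a₂, a₃, (a₂ + a₃) / 3} : Set ℕ)) :=
  quotient_three_012_general a₁ a₂ a₃ hm₁ hm₂ hm₃
end

section
/- Let a_1, a_2, a_3 be positive integers with gcd(a_1, a_2, a_3) = 1 such that a_1 ≡ a_2 ≡ a_3 ≡ 1 (mod 3). Then the quotient ⟨a_1, a_2, a_3⟩/3 equals the numerical semigroup generated by a_1, a_2, a_3, (2a_1 + a_2)/3, (2a_1 + a_3)/3, (2a_2 + a_1)/3, (2a_2 + a_3)/3, (2a_3 + a_1)/3, (2a_3 + a_2)/3, and (a_1 + a_2 + a_3)/3. -/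
/-!
Since every generator is `≡ 1 (mod 3)`, a representation `3m = a_{i₁} + ⋯ + a_{iₖ}` has
`k ≡ 0 (mod 3)`, so its summands can be grouped into triples. Each triple contributes
`(a_i + a_j + a_k)/3`, and the ten multisets `{i, j, k} ⊆ {1, 2, 3}` give exactly the ten listed
generators. The same argument shows `⟨A⟩/p` is generated by the averages of `p`-element
sub-multisets of `A` whenever all elements of `A` are `≡ 1 (mod p)`.
-/

def averages (p : ℕ) (A : Set ℕ) : Set ℕ :=
  {n | ∃ l : List ℕ, l.length = p ∧ (∀ x ∈ l, x ∈ A) ∧ l.sum = p * n}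

theorem List.sum_modEq_length {p : ℕ} {l : List ℕ} (h : ∀ x ∈ l, x ≡ 1 [MOD p]) :
    l.sum ≡ l.length [MOD p] := by
  induction l with
  | nil => rfl
  | cons a l ih =>
    rw [List.forall_mem_cons] at h
    rw [List.sum_cons, List.length_cons, add_comm l.length]
    exact h.1.add (ih h.2)

theorem List.dvd_sum_iff_dvd_length {p : ℕ} {l : List ℕ} (h : ∀ x ∈ l, x ≡ 1 [MOD p]) :
    p ∣ l.sum ↔ p ∣ l.length :=
  (List.sum_modEq_length h).dvd_iff dvd_rfl

section

variable {p : ℕ} {A : Set ℕ}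

theorem mem_averages_three {n : ℕ} :
    n ∈ averages 3 A ↔ ∃ x ∈ A, ∃ y ∈ A, ∃ z ∈ A, x + y + z = 3 * n := by
  constructor
  · rintro ⟨l, hlen, hl, hsum⟩
    obtain ⟨x, y, z, rfl⟩ := List.length_eq_three.1 hlen
    simp only [List.forall_mem_cons, List.not_mem_nil, IsEmpty.forall_iff, implies_true,
      and_true] at hl
    exact ⟨x, hl.1, y, hl.2.1, z, hl.2.2, by simpa [add_assoc] using hsum⟩
  · rintro ⟨x, hx, y, hy, z, hz, hsum⟩
    exact ⟨[x, y, z], rfl, by simp [hx, hy, hz], by simpa [add_assoc] using hsum⟩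

theorem exists_mem_closure_averages_of_dvd_length (hA : ∀ a ∈ A, a ≡ 1 [MOD p])
    {l : List ℕ} (hl : ∀ x ∈ l, x ∈ A) (hlen : p ∣ l.length) :
    ∃ n ∈ AddSubmonoid.closure (averages p A), l.sum = p * n := by
  obtain ⟨k, hk⟩ := hlen
  induction k generalizing l with
  | zero => exact ⟨0, zero_mem _, by simp_all⟩
  | succ k ih =>
    have hl_take : ∀ x ∈ l.take p, x ∈ A := fun x hx => hl x (List.mem_of_mem_take hx)
    have htake : (l.take p).length = p := by
      rw [List.length_take, hk]
      exact min_eq_left (Nat.le_mul_of_pos_right p k.succ_pos)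
    obtain ⟨q, hq⟩ : p ∣ (l.take p).sum :=
      (List.dvd_sum_iff_dvd_length fun x hx => hA x (hl_take x hx)).2 (htake.symm ▸ dvd_rfl)
    obtain ⟨r, hr, hsum⟩ := ih (l := l.drop p) (fun x hx => hl x (List.mem_of_mem_drop hx))
      (by rw [List.length_drop, hk, Nat.mul_succ, Nat.add_sub_cancel])
    refine ⟨q + r, add_mem (AddSubmonoid.subset_closure ⟨l.take p, htake, hl_take, hq⟩) hr, ?_⟩
    rw [← List.sum_take_add_sum_drop l p, hq, hsum, mul_add]

theorem setOf_mul_mem_closure_eq_closure_averages (hp : 0 < p)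
    (hA : ∀ a ∈ A, a ≡ 1 [MOD p]) :
    {m | p * m ∈ AddSubmonoid.closure A} = AddSubmonoid.closure (averages p A) := by
  ext m
  constructor
  · intro hm
    obtain ⟨l, hl, hsum⟩ := AddSubmonoid.exists_list_of_mem_closure hm
    have hlen : p ∣ l.length :=
      (List.dvd_sum_iff_dvd_length fun x hx => hA x (hl x hx)).1 (hsum ▸ dvd_mul_right p m)
    obtain ⟨n, hn, hln⟩ := exists_mem_closure_averages_of_dvd_length hA hl hlen
    rwa [Nat.eq_of_mul_eq_mul_left hp (hsum.symm.trans hln)]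
  · have : AddSubmonoid.closure (averages p A) ≤
        (AddSubmonoid.closure A).comap (AddMonoidHom.mulLeft p) := by
      rw [AddSubmonoid.closure_le]
      rintro n ⟨l, -, hl, hsum⟩
      show p * n ∈ AddSubmonoid.closure A
      exact hsum ▸ list_sum_mem fun x hx => AddSubmonoid.subset_closure (hl x hx)
    exact fun hm => this hm

end

theorem averages_three_triple {a₁ a₂ a₃ : ℕ}
    (hm₁ : a₁ % 3 = 1) (hm₂ : a₂ % 3 = 1) (hm₃ : a₃ % 3 = 1) :
    averages 3 {a₁, a₂, a₃} =
      {a₁, a₂, a₃, (2 * a₁ + a₂) / 3, (2 * a₁ + a₃) / 3, (2 * a₂ + a₁) / 3,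
          (2 * a₂ + a₃) / 3, (2 * a₃ + a₁) / 3, (2 * a₃ + a₂) / 3,
          (a₁ + a₂ + a₃) / 3} := by
  ext n
  simp only [mem_averages_three, Set.mem_insert_iff, Set.mem_singleton_iff]
  constructor
  · rintro ⟨x, hx, y, hy, z, hz, hsum⟩
    -- select the true disjunct one at a time: `omega` on the whole disjunction is exponential
    rcases hx with rfl | rfl | rfl <;> rcases hy with rfl | rfl | rfl <;>
      rcases hz with rfl | rfl | rfl <;> repeat (first | (left; omega) | right)
    all_goals omega
  · rintro (h | h | h | h | h | h | h | h | h | h)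
    · exact ⟨a₁, by simp, a₁, by simp, a₁, by simp, by omega⟩
    · exact ⟨a₂, by simp, a₂, by simp, a₂, by simp, by omega⟩
    · exact ⟨a₃, by simp, a₃, by simp, a₃, by simp, by omega⟩
    · exact ⟨a₁, by simp, a₁, by simp, a₂, by simp, by omega⟩
    · exact ⟨a₁, by simp, a₁, by simp, a₃, by simp, by omega⟩
    · exact ⟨a₂, by simp, a₂, by simp, a₁, by simp, by omega⟩
    · exact ⟨a₂, by simp, a₂, by simp, a₃, by simp, by omega⟩
    · exact ⟨a₃, by simp, a₃, by simp, a₁, by simp, by omega⟩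
    · exact ⟨a₃, by simp, a₃, by simp, a₂, by simp, by omega⟩
    · exact ⟨a₁, by simp, a₂, by simp, a₃, by simp, by omega⟩

theorem quotient_three_111_general
    (a₁ a₂ a₃ : ℕ)
    (hm₁ : a₁ % 3 = 1) (hm₂ : a₂ % 3 = 1) (hm₃ : a₃ % 3 = 1) :
    {m : ℕ | 3 * m ∈ AddSubmonoid.closure ({a₁, a₂, a₃} : Set ℕ)} =
      ↑(AddSubmonoid.closure
        ({a₁, a₂, a₃, (2 * a₁ + a₂) / 3, (2 * a₁ + a₃) / 3, (2 * a₂ + a₁) / 3,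
          (2 * a₂ + a₃) / 3, (2 * a₃ + a₁) / 3, (2 * a₃ + a₂) / 3,
          (a₁ + a₂ + a₃) / 3} : Set ℕ)) := by
  rw [setOf_mul_mem_closure_eq_closure_averages three_pos, averages_three_triple hm₁ hm₂ hm₃]
  rintro a (rfl | rfl | rfl)
  exacts [hm₁, hm₂, hm₃]

/-- Table 1, row (p,t₁,t₂,t₃) = (3,1,1,1): for `a₁ ≡ a₂ ≡ a₃ ≡ 1 (mod 3)` with gcd 1,
`⟨a₁,a₂,a₃⟩/3 = ⟨a₁, a₂, a₃, (2a₁+a₂)/3, (2a₁+a₃)/3, (2a₂+a₁)/3, (2a₂+a₃)/3,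
(2a₃+a₁)/3, (2a₃+a₂)/3, (a₁+a₂+a₃)/3⟩`. -/
theorem quotient_three_111
    (a₁ a₂ a₃ : ℕ) (h₁ : 0 < a₁) (h₂ : 0 < a₂) (h₃ : 0 < a₃)
    (hgcd : Nat.gcd a₁ (Nat.gcd a₂ a₃) = 1)
    (hm₁ : a₁ % 3 = 1) (hm₂ : a₂ % 3 = 1) (hm₃ : a₃ % 3 = 1) :
    {m : ℕ | 3 * m ∈ AddSubmonoid.closure ({a₁, a₂, a₃} : Set ℕ)} =
      ↑(AddSubmonoid.closure
        ({a₁, a₂, a₃, (2 * a₁ + a₂) / 3, (2 * a₁ + a₃) / 3, (2 * a₂ + a₁) / 3,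
          (2 * a₂ + a₃) / 3, (2 * a₃ + a₁) / 3, (2 * a₃ + a₂) / 3,
          (a₁ + a₂ + a₃) / 3} : Set ℕ)) :=
  quotient_three_111_general a₁ a₂ a₃ hm₁ hm₂ hm₃
end
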